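/- arXiv:2006.02492 — 4 statements merged into one kernel-verified Lean document; each statement's English description precedes it below -/
import Mathlib

section
/- Let l > 0, let Λ : [0,l] → ℝ^{k×k} and P : [0,l] → ℝ^{k×k} be continuously differentiable functions taking diagonal-matrix values, let Π : [0,l] → ℝ^{k×k} be continuous, and let W : [0,l] × [0,∞) → ℝ^k be continuously differentiable and satisfy ∂ₜW(x,t) + Λ(x)·∂ₓW(x,t) + Π(x)·W(x,t) = 0 for all (x,t) ∈ [0,l] × [0,∞). Then for each t ≥ 0 the function t ↦ ∫₀ˡ W(x,t)ᵀ P(x) W(x,t) dx is differentiable in t, and its derivative equals −( W(l,t)ᵀ Λ(l) P(l) W(l,t) − W(0,t)ᵀ Λ(0) P(0) W(0,t) ) − ∫₀ˡ W(x,t)ᵀ ( −Λ(x)P′(x) − Λ′(x)P(x) + Π(x)ᵀP(x) + P(x)Π(x) ) W(x,t) dx, where P′ and Λ′ denote entrywise derivatives in x. -/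
open Matrix

open Set MeasureTheory intervalIntegral Topology Filter

lemma contOn_quad {X : Type*} [TopologicalSpace X] {k : ℕ} {s : Set X}
    (A : X → Matrix (Fin k) (Fin k) ℝ) (u v : X → Fin k → ℝ)
    (hA : ∀ i j, ContinuousOn (fun x => A x i j) s)
    (hu : ∀ i, ContinuousOn (fun x => u x i) s)
    (hv : ∀ i, ContinuousOn (fun x => v x i) s) :
    ContinuousOn (fun x => u x ⬝ᵥ (A x *ᵥ v x)) s := by
  simp only [Matrix.mulVec, dotProduct]
  exact continuousOn_finset_sum _ fun i _ =>
    (hu i).mul (continuousOn_finset_sum _ fun j _ => (hA i j).mul (hv j))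

lemma dot_shift {k : ℕ} (A : Matrix (Fin k) (Fin k) ℝ) (u v : Fin k → ℝ) :
    (A *ᵥ u) ⬝ᵥ v = u ⬝ᵥ (Aᵀ *ᵥ v) := by
  rw [dotProduct_comm, dotProduct_mulVec, ← mulVec_transpose, dotProduct_comm]

lemma isDiag_mul_comm {k : ℕ} {A B : Matrix (Fin k) (Fin k) ℝ}
    (hA : A.IsDiag) (hB : B.IsDiag) : A * B = B * A := by
  rw [← hA.diagonal_diag, ← hB.diagonal_diag, diagonal_mul_diagonal, diagonal_mul_diagonal]
  exact congrArg Matrix.diagonal (funext fun i => mul_comm (A.diag i) (B.diag i))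
/-- Time derivative of a parametric integral, one-sided in time. -/
lemma param_integral_hasDerivWithinAt (l : ℝ) (hl : 0 < l) (Q D : ℝ → ℝ → ℝ)
    (cQ : ContinuousOn (fun p : ℝ × ℝ => Q p.1 p.2) (Icc 0 l ×ˢ Ici 0))
    (cD : ContinuousOn (fun p : ℝ × ℝ => D p.1 p.2) (Icc 0 l ×ˢ Ici 0))
    (hQD : ∀ x ∈ Icc (0:ℝ) l, ∀ s ∈ Ici (0:ℝ), HasDerivWithinAt (Q x) (D x s) (Ici 0) s)
    (t : ℝ) (ht : t ∈ Ici (0:ℝ)) :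
    HasDerivWithinAt (fun τ => ∫ x in (0:ℝ)..l, Q x τ) (∫ x in (0:ℝ)..l, D x t)
      (Ici 0) t := by
  -- slice continuity
  have cQx : ∀ τ ∈ Ici (0:ℝ), ContinuousOn (fun x => Q x τ) (Icc 0 l) := by
    intro τ hτ
    exact cQ.comp (Continuous.continuousOn (by fun_prop) : ContinuousOn (fun x => (x, τ)) _) (fun x hx => ⟨hx, hτ⟩)
  have cDx : ∀ τ ∈ Ici (0:ℝ), ContinuousOn (fun x => D x τ) (Icc 0 l) := by
    intro τ hτ
    exact cD.comp (Continuous.continuousOn (by fun_prop) : ContinuousOn (fun x => (x, τ)) _) (fun x hx => ⟨hx, hτ⟩)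
  have cQt : ∀ x ∈ Icc (0:ℝ) l, ContinuousOn (fun s => Q x s) (Ici 0) := by
    intro x hx
    exact cQ.comp (Continuous.continuousOn (by fun_prop) : ContinuousOn (fun s => (x, s)) _) (fun s hs => ⟨hx, hs⟩)
  have cDt : ∀ x ∈ Icc (0:ℝ) l, ContinuousOn (fun s => D x s) (Ici 0) := by
    intro x hx
    exact cD.comp (Continuous.continuousOn (by fun_prop) : ContinuousOn (fun s => (x, s)) _) (fun s hs => ⟨hx, hs⟩)
  -- FTC in time for each x
  have ftc_t : ∀ x ∈ Icc (0:ℝ) l, ∀ a ∈ Ici (0:ℝ), ∀ b ∈ Ici (0:ℝ), a ≤ b →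
      ∫ s in a..b, D x s = Q x b - Q x a := by
    intro x hx a ha b hb hab
    apply integral_eq_sub_of_hasDeriv_right_of_le hab
      ((cQt x hx).mono (Icc_subset_Ici_self.trans (Ici_subset_Ici.mpr ha)))
    · intro s hs
      have hs0 : (0:ℝ) < s := lt_of_le_of_lt ha hs.1
      have := (hQD x hx s (le_of_lt hs0)).hasDerivAt (Ici_mem_nhds hs0)
      exact this.hasDerivWithinAt
    · exact ((cDt x hx).mono (Icc_subset_Ici_self.trans (Ici_subset_Ici.mpr ha))).intervalIntegrable_of_Icc hab
  set g : ℝ → ℝ := fun s => ∫ x in (0:ℝ)..l, D x s with hg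
  have hInt : ∀ a ∈ Ici (0:ℝ), ∀ b, a ≤ b →
      IntegrableOn (fun p : ℝ × ℝ => D p.1 p.2) (Ioc 0 l ×ˢ Ioc a b) volume := by
    intro a ha b hab
    have hsub : (Icc (0:ℝ) l ×ˢ Icc a b) ⊆ Icc 0 l ×ˢ Ici 0 :=
      prod_mono subset_rfl (Icc_subset_Ici_self.trans (Ici_subset_Ici.mpr ha))
    have h1 : IntegrableOn (fun p : ℝ × ℝ => D p.1 p.2) (Icc 0 l ×ˢ Icc a b) volume :=
      (cD.mono hsub).integrableOn_compact (isCompact_Icc.prod isCompact_Icc)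
    exact h1.mono_set (prod_mono Ioc_subset_Icc_self Ioc_subset_Icc_self)
  have fub : ∀ a ∈ Ici (0:ℝ), ∀ b ∈ Ici (0:ℝ), a ≤ b →
      (∫ x in (0:ℝ)..l, (∫ s in a..b, D x s)) = ∫ s in a..b, g s := by
    intro a ha b hb hab
    rw [intervalIntegral.integral_of_le hab, intervalIntegral.integral_of_le hl.le]
    simp_rw [hg, intervalIntegral.integral_of_le hab, intervalIntegral.integral_of_le hl.le]
    apply MeasureTheory.integral_integral_swap
    rw [Function.uncurry_def]
    rw [MeasureTheory.Measure.prod_restrict]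
    have := hInt a ha b hab
    rw [MeasureTheory.IntegrableOn, MeasureTheory.Measure.volume_eq_prod] at this
    exact this
  have main : ∀ a ∈ Ici (0:ℝ), ∀ b ∈ Ici (0:ℝ), a ≤ b →
      ∫ s in a..b, g s = (∫ x in (0:ℝ)..l, Q x b) - (∫ x in (0:ℝ)..l, Q x a) := by
    intro a ha b hb hab
    rw [← fub a ha b hb hab]
    have h1 : Set.EqOn (fun x => ∫ s in a..b, D x s) (fun x => Q x b - Q x a) (uIcc 0 l) := by
      rw [uIcc_of_le hl.le]
      intro x hx
      exact ftc_t x hx a ha b hb hab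
    rw [intervalIntegral.integral_congr h1,
      intervalIntegral.integral_sub
        (((cQx b hb)).intervalIntegrable_of_Icc hl.le)
        (((cQx a ha)).intervalIntegrable_of_Icc hl.le)]
  have hG : ∀ τ ∈ Ici (0:ℝ), (∫ x in (0:ℝ)..l, Q x τ)
      = (∫ x in (0:ℝ)..l, Q x t) + ∫ s in t..τ, g s := by
    intro τ hτ
    rcases le_total t τ with h | h
    · rw [main t ht τ hτ h]; ring
    · rw [intervalIntegral.integral_symm τ t, main τ hτ t ht h]; ring
  have gcont : ∀ T : ℝ, 0 < T → ContinuousOn g (Icc 0 T) := by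
    intro T hT
    obtain ⟨C, hC⟩ := (isCompact_Icc.prod isCompact_Icc).exists_bound_of_continuousOn
      (cD.mono (prod_mono subset_rfl Icc_subset_Ici_self))
    have hcont : ContinuousOn (fun s => ∫ x in Ioc (0:ℝ) l, D x s) (Icc 0 T) := by
      apply MeasureTheory.continuousOn_of_dominated (bound := fun _ => C)
      · intro s hs
        exact ((cDx s hs.1).mono Ioc_subset_Icc_self).aestronglyMeasurable measurableSet_Ioc
      · intro s hs
        filter_upwards [MeasureTheory.ae_restrict_mem measurableSet_Ioc] with x hx
        exact hC (x, s) ⟨Ioc_subset_Icc_self hx, hs⟩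
      · exact MeasureTheory.integrableOn_const measure_Ioc_lt_top.ne
      · filter_upwards [MeasureTheory.ae_restrict_mem measurableSet_Ioc] with x hx
        exact (cDt x (Ioc_subset_Icc_self hx)).mono Icc_subset_Ici_self
    exact hcont.congr (fun s _ => intervalIntegral.integral_of_le hl.le)
  have hmem : Icc (0:ℝ) (t+1) ∈ nhdsWithin t (Ici (0:ℝ)) := by
    exact mem_nhdsWithin.2 ⟨Iio (t+1), isOpen_Iio, Set.mem_Iio.2 (lt_add_one t),
      fun y hy => ⟨hy.2, hy.1.le⟩⟩
  have gct : ContinuousWithinAt g (Icc 0 (t+1)) t :=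
    (gcont (t+1) (by simp only [mem_Ici] at ht; linarith)).continuousWithinAt
      ⟨ht, by simp only [mem_Ici] at ht; linarith⟩
  have gcwa : ContinuousWithinAt g (Ici 0) t := gct.mono_of_mem_nhdsWithin hmem
  have gaesm : MeasureTheory.AEStronglyMeasurable g (MeasureTheory.volume.restrict (Icc 0 (t+1))) :=
    (gcont (t+1) (by simp only [mem_Ici] at ht; linarith)).aestronglyMeasurable measurableSet_Icc
  have prim : HasDerivWithinAt (fun τ => ∫ s in t..τ, g s) (g t) (Ici 0) t := by
    rcases eq_or_lt_of_le (mem_Ici.mp ht) with h0 | h0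
    · have h0 : t = 0 := h0.symm
      subst h0
      have hmeas : StronglyMeasurableAtFilter g (𝓝[>] (0:ℝ)) MeasureTheory.volume :=
        ⟨Icc 0 1, by simpa using (nhdsWithin_mono _ Ioi_subset_Ici_self hmem), by simpa using gaesm⟩
      exact intervalIntegral.integral_hasDerivWithinAt_right
        (IntervalIntegrable.refl) hmeas (gcwa.mono Ioi_subset_Ici_self)
    · have hnb : Icc (0:ℝ) (t+1) ∈ nhds t := Icc_mem_nhds h0 (by linarith)
      have hca : ContinuousAt g t :=
        (gcont (t+1) (by linarith)).continuousAt hnb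
      have hmeas : StronglyMeasurableAtFilter g (nhds t) MeasureTheory.volume :=
        ⟨Icc 0 (t+1), hnb, gaesm⟩
      exact (intervalIntegral.integral_hasDerivAt_right
        (IntervalIntegrable.refl) hmeas hca).hasDerivWithinAt
  exact ((prim.const_add (∫ x in (0:ℝ)..l, Q x t)).congr
    (fun τ hτ => hG τ hτ) (hG t ht))

set_option linter.unusedVariables false in
theorem lyapunov_time_derivative (k : ℕ) (hk : 0 < k) (l : ℝ) (hl : 0 < l)
    (Λ Λ' P P' Pim : ℝ → Matrix (Fin k) (Fin k) ℝ)
    (hΛdiag : ∀ x ∈ Set.Icc (0 : ℝ) l, (Λ x).IsDiag)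
    (hPdiag : ∀ x ∈ Set.Icc (0 : ℝ) l, (P x).IsDiag)
    (hΛderiv : ∀ x ∈ Set.Icc (0 : ℝ) l, ∀ i j,
      HasDerivWithinAt (fun y => Λ y i j) (Λ' x i j) (Set.Icc 0 l) x)
    (hPderiv : ∀ x ∈ Set.Icc (0 : ℝ) l, ∀ i j,
      HasDerivWithinAt (fun y => P y i j) (P' x i j) (Set.Icc 0 l) x)
    (hΛ'cont : ∀ i j, ContinuousOn (fun x => Λ' x i j) (Set.Icc 0 l))
    (hP'cont : ∀ i j, ContinuousOn (fun x => P' x i j) (Set.Icc 0 l))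
    (hPimcont : ∀ i j, ContinuousOn (fun x => Pim x i j) (Set.Icc 0 l))
    (W Wt Wx : ℝ → ℝ → Fin k → ℝ)
    (hWt : ∀ x ∈ Set.Icc (0 : ℝ) l, ∀ t ∈ Set.Ici (0 : ℝ), ∀ i,
      HasDerivWithinAt (fun τ => W x τ i) (Wt x t i) (Set.Ici 0) t)
    (hWx : ∀ x ∈ Set.Icc (0 : ℝ) l, ∀ t ∈ Set.Ici (0 : ℝ), ∀ i,
      HasDerivWithinAt (fun ξ => W ξ t i) (Wx x t i) (Set.Icc 0 l) x)
    (hWcont : ∀ i, ContinuousOn (fun p : ℝ × ℝ => W p.1 p.2 i)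
      (Set.Icc 0 l ×ˢ Set.Ici 0))
    (hWtcont : ∀ i, ContinuousOn (fun p : ℝ × ℝ => Wt p.1 p.2 i)
      (Set.Icc 0 l ×ˢ Set.Ici 0))
    (hWxcont : ∀ i, ContinuousOn (fun p : ℝ × ℝ => Wx p.1 p.2 i)
      (Set.Icc 0 l ×ˢ Set.Ici 0))
    (hPDE : ∀ x ∈ Set.Icc (0 : ℝ) l, ∀ t ∈ Set.Ici (0 : ℝ),
      Wt x t + Λ x *ᵥ Wx x t + Pim x *ᵥ W x t = 0) :
    ∀ t ∈ Set.Ici (0 : ℝ),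
      HasDerivWithinAt
        (fun τ => ∫ x in (0 : ℝ)..l, W x τ ⬝ᵥ (P x *ᵥ W x τ))
        (-((W l t ⬝ᵥ ((Λ l * P l) *ᵥ W l t)) - (W 0 t ⬝ᵥ ((Λ 0 * P 0) *ᵥ W 0 t)))
          - ∫ x in (0 : ℝ)..l,
              W x t ⬝ᵥ ((-(Λ x * P' x) - Λ' x * P x + (Pim x)ᵀ * P x + P x * Pim x) *ᵥ W x t))
        (Set.Ici 0) t := by
  intro t ht
  have cΛe : ∀ i j, ContinuousOn (fun x => Λ x i j) (Set.Icc 0 l) :=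
    fun i j x hx => (hΛderiv x hx i j).continuousWithinAt
  have cPe : ∀ i j, ContinuousOn (fun x => P x i j) (Set.Icc 0 l) :=
    fun i j x hx => (hPderiv x hx i j).continuousWithinAt
  have hmapst : Set.MapsTo (fun x : ℝ => (x, t)) (Set.Icc 0 l) (Set.Icc 0 l ×ˢ Set.Ici 0) :=
    fun x hx => ⟨hx, ht⟩
  have cWslice : ∀ i, ContinuousOn (fun x => W x t i) (Set.Icc 0 l) := fun i =>
    (hWcont i).comp (Continuous.continuousOn (by fun_prop)) hmapst
  have cWtslice : ∀ i, ContinuousOn (fun x => Wt x t i) (Set.Icc 0 l) := fun i =>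
    (hWtcont i).comp (Continuous.continuousOn (by fun_prop)) hmapst
  have cWxslice : ∀ i, ContinuousOn (fun x => Wx x t i) (Set.Icc 0 l) := fun i =>
    (hWxcont i).comp (Continuous.continuousOn (by fun_prop)) hmapst
  have cPe2 : ∀ i j, ContinuousOn (fun p : ℝ × ℝ => P p.1 i j) (Set.Icc 0 l ×ˢ Set.Ici 0) :=
    fun i j => (cPe i j).comp continuousOn_fst (fun p hp => hp.1)
  have cQ : ContinuousOn (fun p : ℝ × ℝ => W p.1 p.2 ⬝ᵥ (P p.1 *ᵥ W p.1 p.2))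
      (Set.Icc 0 l ×ˢ Set.Ici 0) := contOn_quad _ _ _ cPe2 hWcont hWcont
  have cD : ContinuousOn (fun p : ℝ × ℝ =>
        Wt p.1 p.2 ⬝ᵥ (P p.1 *ᵥ W p.1 p.2) + W p.1 p.2 ⬝ᵥ (P p.1 *ᵥ Wt p.1 p.2))
      (Set.Icc 0 l ×ˢ Set.Ici 0) :=
    (contOn_quad _ _ _ cPe2 hWtcont hWcont).add (contOn_quad _ _ _ cPe2 hWcont hWtcont)
  have hQD : ∀ x ∈ Set.Icc (0:ℝ) l, ∀ s ∈ Set.Ici (0:ℝ),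
      HasDerivWithinAt (fun τ => W x τ ⬝ᵥ (P x *ᵥ W x τ))
        (Wt x s ⬝ᵥ (P x *ᵥ W x s) + W x s ⬝ᵥ (P x *ᵥ Wt x s)) (Set.Ici 0) s := by
    intro x hx s hs
    have h1 : HasDerivWithinAt (fun τ => ∑ i, W x τ i * ∑ j, P x i j * W x τ j)
        (∑ i, (Wt x s i * ∑ j, P x i j * W x s j + W x s i * ∑ j, P x i j * Wt x s j))
        (Set.Ici 0) s :=
      HasDerivWithinAt.fun_sum fun i _ =>
        (hWt x hx s hs i).mul
          (HasDerivWithinAt.fun_sum fun j _ => (hWt x hx s hs j).const_mul (P x i j))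
    have e1 : (fun τ => W x τ ⬝ᵥ (P x *ᵥ W x τ))
        = fun τ => ∑ i, W x τ i * ∑ j, P x i j * W x τ j := by
      funext τ; simp [dotProduct, Matrix.mulVec]
    have e2 : Wt x s ⬝ᵥ (P x *ᵥ W x s) + W x s ⬝ᵥ (P x *ᵥ Wt x s)
        = ∑ i, (Wt x s i * ∑ j, P x i j * W x s j + W x s i * ∑ j, P x i j * Wt x s j) := by
      simp [dotProduct, Matrix.mulVec, Finset.sum_add_distrib]
    rw [e1, e2]; exact h1
  have key := param_integral_hasDerivWithinAt l hl _ _ cQ cD hQD t ht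
  set F' : ℝ → ℝ := fun x =>
    Wx x t ⬝ᵥ ((Λ x * P x) *ᵥ W x t) + W x t ⬝ᵥ ((Λ' x * P x + Λ x * P' x) *ᵥ W x t)
      + W x t ⬝ᵥ ((Λ x * P x) *ᵥ Wx x t) with hF'def
  have hF : ∀ x ∈ Set.Icc (0:ℝ) l,
      HasDerivWithinAt (fun ξ => W ξ t ⬝ᵥ ((Λ ξ * P ξ) *ᵥ W ξ t)) (F' x) (Set.Icc 0 l) x := by
    intro x hx
    have h1 : HasDerivWithinAt
        (fun ξ => ∑ i, W ξ t i * ∑ j, (∑ m, Λ ξ i m * P ξ m j) * W ξ t j)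
        (∑ i, (Wx x t i * ∑ j, (∑ m, Λ x i m * P x m j) * W x t j
          + W x t i * ∑ j, ((∑ m, (Λ' x i m * P x m j + Λ x i m * P' x m j)) * W x t j
            + (∑ m, Λ x i m * P x m j) * Wx x t j))) (Set.Icc 0 l) x :=
      HasDerivWithinAt.fun_sum fun i _ =>
        (hWx x hx t ht i).mul (HasDerivWithinAt.fun_sum fun j _ =>
          ((HasDerivWithinAt.fun_sum fun m _ => (hΛderiv x hx i m).mul (hPderiv x hx m j)).mul
            (hWx x hx t ht j)))
    have e1 : (fun ξ => W ξ t ⬝ᵥ ((Λ ξ * P ξ) *ᵥ W ξ t))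
        = fun ξ => ∑ i, W ξ t i * ∑ j, (∑ m, Λ ξ i m * P ξ m j) * W ξ t j := by
      funext ξ; simp [dotProduct, Matrix.mulVec, Matrix.mul_apply]
    have e2 : F' x = ∑ i, (Wx x t i * ∑ j, (∑ m, Λ x i m * P x m j) * W x t j
          + W x t i * ∑ j, ((∑ m, (Λ' x i m * P x m j + Λ x i m * P' x m j)) * W x t j
            + (∑ m, Λ x i m * P x m j) * Wx x t j)) := by
      simp only [hF'def, dotProduct, Matrix.mulVec, Matrix.mul_apply, Matrix.add_apply,
        Finset.sum_add_distrib, mul_add, add_mul]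
      ring
    rw [e1, e2]; exact h1
  have cΛPe : ∀ i j, ContinuousOn (fun x => (Λ x * P x) i j) (Set.Icc 0 l) := by
    intro i j
    simp only [Matrix.mul_apply]
    exact continuousOn_finset_sum _ fun m _ => (cΛe i m).mul (cPe m j)
  have cSum2e : ∀ i j, ContinuousOn (fun x => (Λ' x * P x + Λ x * P' x) i j) (Set.Icc 0 l) := by
    intro i j
    simp only [Matrix.add_apply, Matrix.mul_apply]
    exact (continuousOn_finset_sum _ fun m _ => (hΛ'cont i m).mul (cPe m j)).add
      (continuousOn_finset_sum _ fun m _ => (cΛe i m).mul (hP'cont m j))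
  have cF' : ContinuousOn F' (Set.Icc 0 l) := by
    simp only [hF'def]
    exact ((contOn_quad _ _ _ cΛPe cWxslice cWslice).add
      (contOn_quad _ _ _ cSum2e cWslice cWslice)).add (contOn_quad _ _ _ cΛPe cWslice cWxslice)
  have cMe : ∀ i j, ContinuousOn
      (fun x => (-(Λ x * P' x) - Λ' x * P x + (Pim x)ᵀ * P x + P x * Pim x) i j)
      (Set.Icc 0 l) := by
    intro i j
    simp only [Matrix.add_apply, Matrix.sub_apply, Matrix.neg_apply, Matrix.mul_apply,
      Matrix.transpose_apply]
    refine (((ContinuousOn.neg ?_).sub ?_).add ?_).add ?_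
    · exact continuousOn_finset_sum _ fun m _ => (cΛe i m).mul (hP'cont m j)
    · exact continuousOn_finset_sum _ fun m _ => (hΛ'cont i m).mul (cPe m j)
    · exact continuousOn_finset_sum _ fun m _ => (hPimcont m i).mul (cPe m j)
    · exact continuousOn_finset_sum _ fun m _ => (cPe i m).mul (hPimcont m j)
  have cWMW : ContinuousOn
      (fun x => W x t ⬝ᵥ ((-(Λ x * P' x) - Λ' x * P x + (Pim x)ᵀ * P x + P x * Pim x) *ᵥ W x t))
      (Set.Icc 0 l) := contOn_quad _ _ _ cMe cWslice cWslice
  have hFTCx : (∫ x in (0:ℝ)..l, F' x)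
      = (W l t ⬝ᵥ ((Λ l * P l) *ᵥ W l t)) - (W 0 t ⬝ᵥ ((Λ 0 * P 0) *ᵥ W 0 t)) := by
    refine integral_eq_sub_of_hasDeriv_right_of_le hl.le
      (fun x hx => (hF x hx).continuousWithinAt) ?_ (cF'.intervalIntegrable_of_Icc hl.le)
    intro x hx
    exact ((hF x (Ioo_subset_Icc_self hx)).hasDerivAt
      (Icc_mem_nhds hx.1 hx.2)).hasDerivWithinAt
  have hWtEq : ∀ x ∈ Set.Icc (0:ℝ) l,
      Wt x t = -(Λ x *ᵥ Wx x t) - Pim x *ᵥ W x t := by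
    intro x hx
    have h := hPDE x hx t ht
    rw [add_assoc] at h
    have h2 : Wt x t = -(Λ x *ᵥ Wx x t + Pim x *ᵥ W x t) := eq_neg_of_add_eq_zero_left h
    rw [h2]; abel
  have ptw : ∀ x ∈ Set.Icc (0:ℝ) l,
      Wt x t ⬝ᵥ (P x *ᵥ W x t) + W x t ⬝ᵥ (P x *ᵥ Wt x t)
        = -F' x
          - W x t ⬝ᵥ ((-(Λ x * P' x) - Λ' x * P x + (Pim x)ᵀ * P x + P x * Pim x) *ᵥ W x t) := by
    intro x hx
    have hPs : (P x)ᵀ = P x := (hPdiag x hx).isSymm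
    have hΛs : (Λ x)ᵀ = Λ x := (hΛdiag x hx).isSymm
    have hcomm : P x * Λ x = Λ x * P x := isDiag_mul_comm (hPdiag x hx) (hΛdiag x hx)
    rw [hWtEq x hx]
    simp only [hF'def, Matrix.mulVec_sub, Matrix.mulVec_neg, Matrix.sub_mulVec,
      Matrix.neg_mulVec, Matrix.add_mulVec, sub_dotProduct, neg_dotProduct, add_dotProduct,
      dotProduct_sub, dotProduct_neg, dotProduct_add, Matrix.mulVec_mulVec, dot_shift,
      hΛs, hPs, hcomm]
    ring
  have e3 : Set.EqOn
      (fun x => Wt x t ⬝ᵥ (P x *ᵥ W x t) + W x t ⬝ᵥ (P x *ᵥ Wt x t))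
      (fun x => -F' x
        - W x t ⬝ᵥ ((-(Λ x * P' x) - Λ' x * P x + (Pim x)ᵀ * P x + P x * Pim x) *ᵥ W x t))
      (Set.uIcc 0 l) := by
    rw [Set.uIcc_of_le hl.le]; exact fun x hx => ptw x hx
  have hval : (∫ x in (0:ℝ)..l, (Wt x t ⬝ᵥ (P x *ᵥ W x t) + W x t ⬝ᵥ (P x *ᵥ Wt x t)))
      = -((W l t ⬝ᵥ ((Λ l * P l) *ᵥ W l t)) - (W 0 t ⬝ᵥ ((Λ 0 * P 0) *ᵥ W 0 t)))
        - ∫ x in (0:ℝ)..l,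
            W x t ⬝ᵥ ((-(Λ x * P' x) - Λ' x * P x + (Pim x)ᵀ * P x + P x * Pim x) *ᵥ W x t) := by
    rw [intervalIntegral.integral_congr e3,
      intervalIntegral.integral_sub (f := fun x => -F' x) (cF'.neg.intervalIntegrable_of_Icc hl.le)
        (cWMW.intervalIntegrable_of_Icc hl.le),
      intervalIntegral.integral_neg, hFTCx]
  rw [hval] at key
  exact key
end

section
/- Let l > 0 and 0 < m < k. Let Λ(x) = diag(Λ⁺(x), −Λ⁻(x)) where Λ⁺ : [0,l] → ℝ^{m×m} and Λ⁻ : [0,l] → ℝ^{(k−m)×(k−m)} are continuously differentiable diagonal-matrix-valued functions with strictly positive diagonal entries, let Π : [0,l] → ℝ^{k×k} be continuous, let P(x) = diag(P⁺(x), P⁻(x)) be a continuously differentiable diagonal-matrix-valued weight with strictly positive diagonal entries, let K, M ∈ ℝ^{k×k} with M diagonal, let b : [0,∞) → ℝ^k be continuous, and let ξ > 0. Let W : [0,l] × [0,∞) → ℝ^k, written W = (W⁺, W⁻) with W⁺ the first m components and W⁻ the last k−m components, be a continuously differentiable solution of ∂ₜW + Λ(x)∂ₓW + Π(x)W = 0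 satisfying the boundary conditions (W⁺(0,t), W⁻(l,t)) = K·(W⁺(l,t), W⁻(0,t)) + M·b(t) for all t ≥ 0. Assume: (i) there is η > 0 such that for all x ∈ [0,l] and all v ∈ ℝ^k, vᵀ( −Λ(x)P′(x) − Λ′(x)P(x) + Π(x)ᵀP(x) + P(x)Π(x) )v ≥ η·vᵀP(x)v; (ii) the matrix diag(Λ⁺(l)P⁺(l), Λ⁻(0)P⁻(0)) − (1 + ξ)·Kᵀ·diag(Λ⁺(0)P⁺(0), Λ⁻(l)P⁻(l))·K is positive semi-definite; (iii) ν > 0 satisfies cᵀMᵀ·diag(Λ⁺(0)P⁺(0), Λ⁻(l)P⁻(l))·Mc ≤ ν·|c|² for all c ∈ ℝ^k. Then the function L(t) = ∫₀ˡ W(x,t)ᵀP(x)W(x,t) dx is differentiable and satisfies L′(t) ≤ −η·L(t) + ν·(1 + 1/ξ)·sup_{s∈[0,t]} |b(s)|² for all t ≥ 0. -/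
open Matrix

/-- The block-diagonal matrix `diag(diagonal a, diagonal c)` built from the
diagonal entries `a` of the upper-left block and `c` of the lower-right block. -/
def blkdiag {m km : ℕ} (a : Fin m → ℝ) (c : Fin km → ℝ) :
    Matrix (Fin m ⊕ Fin km) (Fin m ⊕ Fin km) ℝ :=
  Matrix.fromBlocks (Matrix.diagonal a) 0 0 (Matrix.diagonal c)


open Set MeasureTheory intervalIntegral

lemma blkdiag_mulVec {m km : ℕ} (a : Fin m → ℝ) (c : Fin km → ℝ)
    (v : Fin m ⊕ Fin km → ℝ) (j : Fin m ⊕ Fin km) :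
    (blkdiag a c *ᵥ v) j = Sum.elim a c j * v j := by
  cases j <;> simp [blkdiag, fromBlocks_mulVec, mulVec_diagonal]

lemma lamblk_mulVec {m km : ℕ} (a : Fin m → ℝ) (c : Fin km → ℝ)
    (v : Fin m ⊕ Fin km → ℝ) (j : Fin m ⊕ Fin km) :
    ((Matrix.fromBlocks (Matrix.diagonal a) 0 0 (-(Matrix.diagonal c))) *ᵥ v) j
      = Sum.elim a (fun i => -(c i)) j * v j := by
  cases j <;> simp [fromBlocks_mulVec, mulVec_diagonal, neg_mul]

lemma young_ineq {ξ : ℝ} (hξ : 0 < ξ) (a c : ℝ) :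
    (a + c) ^ 2 ≤ (1 + ξ) * a ^ 2 + (1 + 1/ξ) * c ^ 2 := by
  rw [← mul_le_mul_iff_right₀ hξ]
  have h1 : ξ * (1/ξ) = 1 := by field_simp
  nlinarith [sq_nonneg (ξ * a - c)]

lemma deriv_L {ι : Type*} [Fintype ι] {l : ℝ} (hl : 0 < l)
    (p p' lam lam' : ℝ → ι → ℝ) (Pim : ℝ → Matrix ι ι ℝ)
    (W Wt Wx : ℝ → ℝ → ι → ℝ) (η : ℝ)
    (hpderiv : ∀ x ∈ Icc (0:ℝ) l, ∀ i, HasDerivWithinAt (fun y => p y i) (p' x i) (Icc 0 l) x)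
    (hlamderiv : ∀ x ∈ Icc (0:ℝ) l, ∀ i, HasDerivWithinAt (fun y => lam y i) (lam' x i) (Icc 0 l) x)
    (hp'cont : ∀ i, ContinuousOn (fun x => p' x i) (Icc 0 l))
    (hlam'cont : ∀ i, ContinuousOn (fun x => lam' x i) (Icc 0 l))
    (hWt : ∀ x ∈ Icc (0:ℝ) l, ∀ t ∈ Ici (0:ℝ), ∀ i,
      HasDerivWithinAt (fun τ => W x τ i) (Wt x t i) (Ici 0) t)
    (hWx : ∀ x ∈ Icc (0:ℝ) l, ∀ t ∈ Ici (0:ℝ), ∀ i,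
      HasDerivWithinAt (fun y => W y t i) (Wx x t i) (Icc 0 l) x)
    (hWcont : ∀ i, ContinuousOn (fun q : ℝ × ℝ => W q.1 q.2 i) (Icc 0 l ×ˢ Ici 0))
    (hWtcont : ∀ i, ContinuousOn (fun q : ℝ × ℝ => Wt q.1 q.2 i) (Icc 0 l ×ˢ Ici 0))
    (hWxcont : ∀ i, ContinuousOn (fun q : ℝ × ℝ => Wx q.1 q.2 i) (Icc 0 l ×ˢ Ici 0))
    (hPDEc : ∀ x ∈ Icc (0:ℝ) l, ∀ t ∈ Ici (0:ℝ), ∀ j,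
      Wt x t j = -(lam x j * Wx x t j) - (Pim x *ᵥ W x t) j)
    (hdiss' : ∀ x ∈ Icc (0:ℝ) l, ∀ v : ι → ℝ,
      η * ∑ j, p x j * v j ^ 2 ≤
        -(∑ j, lam x j * p' x j * v j ^ 2) - (∑ j, lam' x j * p x j * v j ^ 2)
          + 2 * ∑ j, p x j * v j * (Pim x *ᵥ v) j) :
    ∃ L' : ℝ → ℝ,
      (∀ t ∈ Ici (0:ℝ), HasDerivWithinAt
        (fun τ => ∫ x in (0:ℝ)..l, ∑ j, p x j * W x τ j ^ 2) (L' t) (Ici 0) t) ∧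
      (∀ t ∈ Ici (0:ℝ), L' t ≤
        -η * (∫ x in (0:ℝ)..l, ∑ j, p x j * W x t j ^ 2)
          + ((∑ j, lam 0 j * p 0 j * W 0 t j ^ 2) - ∑ j, lam l j * p l j * W l t j ^ 2)) := by
  have h0l : (0:ℝ) ∈ Icc (0:ℝ) l := ⟨le_rfl, hl.le⟩
  have hll : l ∈ Icc (0:ℝ) l := ⟨hl.le, le_rfl⟩
  have hpc : ∀ i, ContinuousOn (fun x => p x i) (Icc (0:ℝ) l) :=
    fun i x hx => (hpderiv x hx i).continuousWithinAt
  have hlamc : ∀ i, ContinuousOn (fun x => lam x i) (Icc (0:ℝ) l) :=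
    fun i x hx => (hlamderiv x hx i).continuousWithinAt
  -- clamping
  set cl : ℝ → ℝ := fun x => max 0 (min x l) with hcl_def
  have hclcont : Continuous cl := continuous_const.max (continuous_id.min continuous_const)
  have hclmem : ∀ x, cl x ∈ Icc (0:ℝ) l := fun x =>
    ⟨le_max_left _ _, max_le (hl.le) (min_le_right _ _)⟩
  have hcleq : ∀ x ∈ Icc (0:ℝ) l, cl x = x := fun x hx => by
    simp [hcl_def, min_eq_left hx.2, max_eq_right hx.1]
  set ct : ℝ → ℝ := fun τ => max 0 τ with hct_def
  have hctcont : Continuous ct := continuous_const.max continuous_id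
  have hctmem : ∀ τ, ct τ ∈ Ici (0:ℝ) := fun τ => Set.mem_Ici.mpr (le_max_left _ _)
  have hcteq : ∀ τ ∈ Ici (0:ℝ), ct τ = τ := fun τ hτ => max_eq_right hτ
  -- continuity of ContinuousOn pieces composed with fst
  have hfst : ∀ {f : ℝ → ℝ}, ContinuousOn f (Icc (0:ℝ) l) →
      ContinuousOn (fun q : ℝ × ℝ => f q.1) (Icc (0:ℝ) l ×ˢ Ici (0:ℝ)) := by
    intro f hf
    exact hf.comp continuousOn_fst (fun q hq => hq.1)
  -- the extended time-derivative integrand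
  set g : ℝ × ℝ → ℝ := fun q =>
    ∑ j, p (cl q.1) j * (2 * W (cl q.1) (ct q.2) j * Wt (cl q.1) (ct q.2) j) with hg_def
  have hproj : Continuous (fun q : ℝ × ℝ => ((cl q.1, ct q.2) : ℝ × ℝ)) :=
    (hclcont.comp continuous_fst).prodMk (hctcont.comp continuous_snd)
  have hgcont : Continuous g := by
    apply continuous_finset_sum
    intro j _
    have hin : ContinuousOn
        (fun q : ℝ × ℝ => p q.1 j * (2 * W q.1 q.2 j * Wt q.1 q.2 j))
        (Icc (0:ℝ) l ×ˢ Ici (0:ℝ)) :=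
      (hfst (hpc j)).mul ((continuousOn_const.mul (hWcont j)).mul (hWtcont j))
    exact hin.comp_continuous hproj (fun q => ⟨hclmem q.1, hctmem q.2⟩)
  -- pointwise values of g on the strip
  have hg_eq : ∀ x ∈ Icc (0:ℝ) l, ∀ t ∈ Ici (0:ℝ),
      g (x, t) = ∑ j, p x j * (2 * W x t j * Wt x t j) := by
    intro x hx t ht
    simp only [hg_def, hcleq x hx, hcteq t ht]
  -- derivative of V in time
  have hDt : ∀ x ∈ Icc (0:ℝ) l, ∀ t ∈ Ici (0:ℝ),
      HasDerivWithinAt (fun τ => ∑ j, p x j * W x τ j ^ 2)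
        (∑ j, p x j * (2 * W x t j * Wt x t j)) (Ici 0) t := by
    intro x hx t ht
    refine HasDerivWithinAt.fun_sum fun j _ => ?_
    have h := ((hWt x hx t ht j).fun_mul (hWt x hx t ht j)).const_mul (p x j)
    have hfg : (fun τ => p x j * W x τ j ^ 2)
        = fun τ => p x j * (W x τ j * W x τ j) := by funext τ; ring
    rw [hfg]
    convert h using 1
    exacts [rfl, by ring]
  -- derivative of the flux in space
  have hDx : ∀ x ∈ Icc (0:ℝ) l, ∀ t ∈ Ici (0:ℝ),
      HasDerivWithinAt (fun y => ∑ j, lam y j * p y j * W y t j ^ 2)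
        (∑ j, ((lam' x j * p x j + lam x j * p' x j) * W x t j ^ 2
          + lam x j * p x j * (2 * W x t j * Wx x t j))) (Icc 0 l) x := by
    intro x hx t ht
    refine HasDerivWithinAt.fun_sum fun j _ => ?_
    have h := ((hlamderiv x hx j).fun_mul (hpderiv x hx j)).fun_mul
      ((hWx x hx t ht j).fun_mul (hWx x hx t ht j))
    have hfg : (fun y => lam y j * p y j * W y t j ^ 2)
        = fun y => lam y j * p y j * (W y t j * W y t j) := by funext y; ring
    rw [hfg]
    convert h using 1
    exacts [rfl, by ring]
  -- continuity of V lines and columns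
  have hVline : ∀ t ∈ Ici (0:ℝ),
      ContinuousOn (fun x => ∑ j, p x j * W x t j ^ 2) (Icc (0:ℝ) l) := by
    intro t ht
    refine continuousOn_finset_sum _ fun j _ => ?_
    have hWl : ContinuousOn (fun x => W x t j) (Icc (0:ℝ) l) :=
      (hWcont j).comp (continuous_id.prodMk continuous_const).continuousOn
        (fun x hx => ⟨hx, ht⟩)
    exact (hpc j).mul (hWl.pow 2)
  have hVcol : ∀ x ∈ Icc (0:ℝ) l,
      ContinuousOn (fun s => ∑ j, p x j * W x s j ^ 2) (Ici (0:ℝ)) := by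
    intro x hx
    refine continuousOn_finset_sum _ fun j _ => ?_
    have hWc : ContinuousOn (fun s => W x s j) (Ici (0:ℝ)) :=
      (hWcont j).comp (continuous_const.prodMk continuous_id).continuousOn
        (fun s hs => ⟨hx, hs⟩)
    exact continuousOn_const.mul (hWc.pow 2)
  have hVtcol : ∀ x ∈ Icc (0:ℝ) l,
      ContinuousOn (fun s => ∑ j, p x j * (2 * W x s j * Wt x s j)) (Ici (0:ℝ)) := by
    intro x hx
    refine continuousOn_finset_sum _ fun j _ => ?_
    have hWc : ContinuousOn (fun s => W x s j) (Ici (0:ℝ)) :=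
      (hWcont j).comp (continuous_const.prodMk continuous_id).continuousOn
        (fun s hs => ⟨hx, hs⟩)
    have hWtc : ContinuousOn (fun s => Wt x s j) (Ici (0:ℝ)) :=
      (hWtcont j).comp (continuous_const.prodMk continuous_id).continuousOn
        (fun s hs => ⟨hx, hs⟩)
    exact continuousOn_const.mul ((continuousOn_const.mul hWc).mul hWtc)
  -- FTC in time on [0, τ]
  have hFTCt : ∀ x ∈ Icc (0:ℝ) l, ∀ τ ∈ Ici (0:ℝ),
      ∫ s in (0:ℝ)..τ, (∑ j, p x j * (2 * W x s j * Wt x s j))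
        = (∑ j, p x j * W x τ j ^ 2) - ∑ j, p x j * W x 0 j ^ 2 := by
    intro x hx τ hτ
    refine integral_eq_sub_of_hasDeriv_right_of_le hτ
      ((hVcol x hx).mono Icc_subset_Ici_self) ?_ ?_
    · intro s hs
      exact (hDt x hx s hs.1.le).mono (fun y hy => le_trans hs.1.le hy.le)
    · apply ContinuousOn.intervalIntegrable
      rw [uIcc_of_le hτ]
      exact (hVtcol x hx).mono Icc_subset_Ici_self
  -- parametrized integral of g
  set G : ℝ → ℝ := fun τ => ∫ x in (0:ℝ)..l, g (x, τ) with hG_def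
  have hGcont : Continuous G := by
    have : Continuous (Function.uncurry fun τ x => g (x, τ)) :=
      hgcont.comp (continuous_snd.prodMk continuous_fst)
    exact continuous_parametric_intervalIntegral_of_continuous' this 0 l
  -- Fubini
  have hFub : ∀ τ ∈ Ici (0:ℝ),
      ∫ x in (0:ℝ)..l, (∫ s in (0:ℝ)..τ, g (x, s)) = ∫ s in (0:ℝ)..τ, G s := by
    intro τ hτ
    have hint : IntegrableOn g (Ioc (0:ℝ) l ×ˢ Ioc (0:ℝ) τ) (volume.prod volume) := by
      have h1 : IntegrableOn g (Icc (0:ℝ) l ×ˢ Icc (0:ℝ) τ) (volume.prod volume) :=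
        hgcont.continuousOn.integrableOn_compact (isCompact_Icc.prod isCompact_Icc)
      exact h1.mono_set (prod_mono Ioc_subset_Icc_self Ioc_subset_Icc_self)
    have hswap : ∫ x in Ioc (0:ℝ) l, (∫ s in Ioc (0:ℝ) τ, g (x, s))
        = ∫ s in Ioc (0:ℝ) τ, (∫ x in Ioc (0:ℝ) l, g (x, s)) := by
      apply integral_integral_swap
      rw [Measure.prod_restrict]
      exact hint
    rw [integral_of_le hl.le, integral_of_le hτ]
    simp_rw [integral_of_le hτ]
    rw [hswap]
    refine setIntegral_congr_fun measurableSet_Ioc fun s _ => ?_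
    exact (integral_of_le hl.le).symm
  -- representation of L
  set L : ℝ → ℝ := fun τ => ∫ x in (0:ℝ)..l, ∑ j, p x j * W x τ j ^ 2 with hL_def
  have hVint : ∀ τ ∈ Ici (0:ℝ),
      IntervalIntegrable (fun x => ∑ j, p x j * W x τ j ^ 2) volume 0 l := by
    intro τ hτ
    apply ContinuousOn.intervalIntegrable
    rw [uIcc_of_le hl.le]
    exact hVline τ hτ
  have hLrep : ∀ τ ∈ Ici (0:ℝ), L τ = L 0 + ∫ s in (0:ℝ)..τ, G s := by
    intro τ hτ
    have h1 : L τ - L 0 = ∫ x in (0:ℝ)..l,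
        ((∑ j, p x j * W x τ j ^ 2) - ∑ j, p x j * W x 0 j ^ 2) :=
      (intervalIntegral.integral_sub (hVint τ hτ) (hVint 0 Set.self_mem_Ici)).symm
    have h2 : ∫ x in (0:ℝ)..l,
        ((∑ j, p x j * W x τ j ^ 2) - ∑ j, p x j * W x 0 j ^ 2)
        = ∫ x in (0:ℝ)..l, (∫ s in (0:ℝ)..τ, g (x, s)) := by
      apply integral_congr
      intro x hx
      rw [uIcc_of_le hl.le] at hx
      dsimp only
      rw [← hFTCt x hx τ hτ]
      apply integral_congr
      intro s hs
      rw [uIcc_of_le hτ] at hs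
      exact (hg_eq x hx s hs.1).symm
    have := hFub τ hτ
    linarith [h1, h2, this]
  -- derivative of L
  have hLderiv : ∀ t ∈ Ici (0:ℝ), HasDerivWithinAt L (G t) (Ici 0) t := by
    intro t ht
    have h1 : HasDerivAt (fun τ => ∫ s in (0:ℝ)..τ, G s) (G t) t :=
      integral_hasDerivAt_right (hGcont.intervalIntegrable _ _)
        (hGcont.stronglyMeasurableAtFilter _ _) hGcont.continuousAt
    have h2 : HasDerivWithinAt (fun τ => L 0 + ∫ s in (0:ℝ)..τ, G s) (G t) (Ici 0) t :=
      ((h1.const_add (L 0)).hasDerivWithinAt)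
    exact h2.congr (fun τ hτ => hLrep τ hτ) (hLrep t ht)
  -- line continuity helpers
  have hWline : ∀ t ∈ Ici (0:ℝ), ∀ j, ContinuousOn (fun x => W x t j) (Icc (0:ℝ) l) :=
    fun t ht j => (hWcont j).comp (continuous_id.prodMk continuous_const).continuousOn
      (fun x hx => ⟨hx, ht⟩)
  have hWtline : ∀ t ∈ Ici (0:ℝ), ∀ j, ContinuousOn (fun x => Wt x t j) (Icc (0:ℝ) l) :=
    fun t ht j => (hWtcont j).comp (continuous_id.prodMk continuous_const).continuousOn
      (fun x hx => ⟨hx, ht⟩)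
  have hWxline : ∀ t ∈ Ici (0:ℝ), ∀ j, ContinuousOn (fun x => Wx x t j) (Icc (0:ℝ) l) :=
    fun t ht j => (hWxcont j).comp (continuous_id.prodMk continuous_const).continuousOn
      (fun x hx => ⟨hx, ht⟩)
  -- pointwise key inequality
  have hkey : ∀ t ∈ Ici (0:ℝ), ∀ x ∈ Icc (0:ℝ) l,
      (∑ j, p x j * (2 * W x t j * Wt x t j)) ≤
        -(∑ j, ((lam' x j * p x j + lam x j * p' x j) * W x t j ^ 2
            + lam x j * p x j * (2 * W x t j * Wx x t j)))
          - η * ∑ j, p x j * W x t j ^ 2 := by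
    intro t ht x hx
    have hterm : ∀ j, p x j * (2 * W x t j * Wt x t j)
        = -(((lam' x j * p x j + lam x j * p' x j) * W x t j ^ 2
            + lam x j * p x j * (2 * W x t j * Wx x t j)))
          + (lam x j * p' x j * W x t j ^ 2 + lam' x j * p x j * W x t j ^ 2
            - 2 * (p x j * W x t j * (Pim x *ᵥ W x t) j)) := by
      intro j
      rw [hPDEc x hx t ht j]
      ring
    have eqA : (∑ j, p x j * (2 * W x t j * Wt x t j))
        = -(∑ j, ((lam' x j * p x j + lam x j * p' x j) * W x t j ^ 2
            + lam x j * p x j * (2 * W x t j * Wx x t j)))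
          + ((∑ j, lam x j * p' x j * W x t j ^ 2)
            + (∑ j, lam' x j * p x j * W x t j ^ 2)
            - 2 * ∑ j, p x j * W x t j * (Pim x *ᵥ W x t) j) := by
      rw [Finset.sum_congr rfl (fun j _ => hterm j)]
      simp only [Finset.sum_add_distrib, Finset.sum_sub_distrib, Finset.sum_neg_distrib,
        ← Finset.mul_sum]
    have hd := hdiss' x hx (W x t)
    rw [eqA]
    linarith
  -- integrability of the various integrands
  have hVtint : ∀ t ∈ Ici (0:ℝ), IntervalIntegrable
      (fun x => ∑ j, p x j * (2 * W x t j * Wt x t j)) volume 0 l := by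
    intro t ht
    apply ContinuousOn.intervalIntegrable
    rw [uIcc_of_le hl.le]
    refine continuousOn_finset_sum _ fun j _ => ?_
    exact (hpc j).mul ((continuousOn_const.mul (hWline t ht j)).mul (hWtline t ht j))
  have hFxint : ∀ t ∈ Ici (0:ℝ), IntervalIntegrable
      (fun x => ∑ j, ((lam' x j * p x j + lam x j * p' x j) * W x t j ^ 2
        + lam x j * p x j * (2 * W x t j * Wx x t j))) volume 0 l := by
    intro t ht
    apply ContinuousOn.intervalIntegrable
    rw [uIcc_of_le hl.le]
    refine continuousOn_finset_sum _ fun j _ => ?_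
    exact ((((hlam'cont j).mul (hpc j)).add ((hlamc j).mul (hp'cont j))).mul
      ((hWline t ht j).pow 2)).add (((hlamc j).mul (hpc j)).mul
        ((continuousOn_const.mul (hWline t ht j)).mul (hWxline t ht j)))
  -- FTC in space for the flux
  have hFTCx : ∀ t ∈ Ici (0:ℝ),
      ∫ x in (0:ℝ)..l, (∑ j, ((lam' x j * p x j + lam x j * p' x j) * W x t j ^ 2
        + lam x j * p x j * (2 * W x t j * Wx x t j)))
      = (∑ j, lam l j * p l j * W l t j ^ 2) - ∑ j, lam 0 j * p 0 j * W 0 t j ^ 2 := by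
    intro t ht
    refine integral_eq_sub_of_hasDeriv_right_of_le
      (f := fun y => ∑ j, lam y j * p y j * W y t j ^ 2) hl.le ?_ ?_ (hFxint t ht)
    · refine continuousOn_finset_sum _ fun j _ => ?_
      exact ((hlamc j).mul (hpc j)).mul ((hWline t ht j).pow 2)
    · intro x hx
      exact ((hDx x ⟨hx.1.le, hx.2.le⟩ t ht).hasDerivAt
        (Icc_mem_nhds hx.1 hx.2)).hasDerivWithinAt
  -- conclusion
  refine ⟨G, hLderiv, ?_⟩
  intro t ht
  have hGt : G t = ∫ x in (0:ℝ)..l, ∑ j, p x j * (2 * W x t j * Wt x t j) := by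
    apply integral_congr
    intro x hx
    rw [uIcc_of_le hl.le] at hx
    exact hg_eq x hx t ht
  have hmono : (∫ x in (0:ℝ)..l, ∑ j, p x j * (2 * W x t j * Wt x t j))
      ≤ ∫ x in (0:ℝ)..l,
        (-(∑ j, ((lam' x j * p x j + lam x j * p' x j) * W x t j ^ 2
            + lam x j * p x j * (2 * W x t j * Wx x t j)))
          - η * ∑ j, p x j * W x t j ^ 2) :=
    intervalIntegral.integral_mono_on hl.le (hVtint t ht)
      (((hFxint t ht).neg).sub ((hVint t ht).const_mul η)) (hkey t ht)
  rw [intervalIntegral.integral_sub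
      (f := fun x => -(∑ j, ((lam' x j * p x j + lam x j * p' x j) * W x t j ^ 2
        + lam x j * p x j * (2 * W x t j * Wx x t j))))
      (g := fun x => η * ∑ j, p x j * W x t j ^ 2)
      ((hFxint t ht).neg) ((hVint t ht).const_mul η),
    intervalIntegral.integral_neg, intervalIntegral.integral_const_mul,
    hFTCx t ht] at hmono
  rw [hGt]
  linarith

theorem iss_lyapunov_function_decay (m km : ℕ) (hm : 0 < m) (hkm : 0 < km)
    (l : ℝ) (hl : 0 < l)
    (Λp Λp' Pp Pp' : ℝ → Fin m → ℝ) (Λm Λm' Pm Pm' : ℝ → Fin km → ℝ)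
    (Pim : ℝ → Matrix (Fin m ⊕ Fin km) (Fin m ⊕ Fin km) ℝ)
    (K M : Matrix (Fin m ⊕ Fin km) (Fin m ⊕ Fin km) ℝ) (hM : M.IsDiag)
    (b : ℝ → Fin m ⊕ Fin km → ℝ)
    (ξ η ν : ℝ) (hξ : 0 < ξ) (hη : 0 < η) (hν : 0 < ν)
    -- regularity and positivity of the coefficients
    (hΛpderiv : ∀ x ∈ Set.Icc (0 : ℝ) l, ∀ i,
      HasDerivWithinAt (fun y => Λp y i) (Λp' x i) (Set.Icc 0 l) x)
    (hΛmderiv : ∀ x ∈ Set.Icc (0 : ℝ) l, ∀ i,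
      HasDerivWithinAt (fun y => Λm y i) (Λm' x i) (Set.Icc 0 l) x)
    (hΛp'cont : ∀ i, ContinuousOn (fun x => Λp' x i) (Set.Icc 0 l))
    (hΛm'cont : ∀ i, ContinuousOn (fun x => Λm' x i) (Set.Icc 0 l))
    (hΛppos : ∀ x ∈ Set.Icc (0 : ℝ) l, ∀ i, 0 < Λp x i)
    (hΛmpos : ∀ x ∈ Set.Icc (0 : ℝ) l, ∀ i, 0 < Λm x i)
    (hPpderiv : ∀ x ∈ Set.Icc (0 : ℝ) l, ∀ i,
      HasDerivWithinAt (fun y => Pp y i) (Pp' x i) (Set.Icc 0 l) x)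
    (hPmderiv : ∀ x ∈ Set.Icc (0 : ℝ) l, ∀ i,
      HasDerivWithinAt (fun y => Pm y i) (Pm' x i) (Set.Icc 0 l) x)
    (hPp'cont : ∀ i, ContinuousOn (fun x => Pp' x i) (Set.Icc 0 l))
    (hPm'cont : ∀ i, ContinuousOn (fun x => Pm' x i) (Set.Icc 0 l))
    (hPppos : ∀ x ∈ Set.Icc (0 : ℝ) l, ∀ i, 0 < Pp x i)
    (hPmpos : ∀ x ∈ Set.Icc (0 : ℝ) l, ∀ i, 0 < Pm x i)
    (hPimcont : ∀ i j, ContinuousOn (fun x => Pim x i j) (Set.Icc 0 l))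
    (hbcont : ∀ i, ContinuousOn (fun t => b t i) (Set.Ici 0))
    -- the C¹ solution of the balance law
    (W Wt Wx : ℝ → ℝ → Fin m ⊕ Fin km → ℝ)
    (hWt : ∀ x ∈ Set.Icc (0 : ℝ) l, ∀ t ∈ Set.Ici (0 : ℝ), ∀ i,
      HasDerivWithinAt (fun τ => W x τ i) (Wt x t i) (Set.Ici 0) t)
    (hWx : ∀ x ∈ Set.Icc (0 : ℝ) l, ∀ t ∈ Set.Ici (0 : ℝ), ∀ i,
      HasDerivWithinAt (fun y => W y t i) (Wx x t i) (Set.Icc 0 l) x)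
    (hWcont : ∀ i, ContinuousOn (fun p : ℝ × ℝ => W p.1 p.2 i)
      (Set.Icc 0 l ×ˢ Set.Ici 0))
    (hWtcont : ∀ i, ContinuousOn (fun p : ℝ × ℝ => Wt p.1 p.2 i)
      (Set.Icc 0 l ×ˢ Set.Ici 0))
    (hWxcont : ∀ i, ContinuousOn (fun p : ℝ × ℝ => Wx p.1 p.2 i)
      (Set.Icc 0 l ×ˢ Set.Ici 0))
    (hPDE : ∀ x ∈ Set.Icc (0 : ℝ) l, ∀ t ∈ Set.Ici (0 : ℝ),
      Wt x t + (Matrix.fromBlocks (Matrix.diagonal (Λp x)) 0 0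
        (-(Matrix.diagonal (Λm x)))) *ᵥ Wx x t + Pim x *ᵥ W x t = 0)
    -- boundary conditions with disturbance
    (hBC : ∀ t ∈ Set.Ici (0 : ℝ),
      Sum.elim (fun i => W 0 t (Sum.inl i)) (fun i => W l t (Sum.inr i)) =
        K *ᵥ Sum.elim (fun i => W l t (Sum.inl i)) (fun i => W 0 t (Sum.inr i))
          + M *ᵥ b t)
    -- (i) interior dissipativity
    (hdiss : ∀ x ∈ Set.Icc (0 : ℝ) l, ∀ v : Fin m ⊕ Fin km → ℝ,
      η * (v ⬝ᵥ (blkdiag (Pp x) (Pm x) *ᵥ v)) ≤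
        v ⬝ᵥ ((-( (Matrix.fromBlocks (Matrix.diagonal (Λp x)) 0 0
                  (-(Matrix.diagonal (Λm x)))) * blkdiag (Pp' x) (Pm' x))
            - (Matrix.fromBlocks (Matrix.diagonal (Λp' x)) 0 0
                  (-(Matrix.diagonal (Λm' x)))) * blkdiag (Pp x) (Pm x)
            + (Pim x)ᵀ * blkdiag (Pp x) (Pm x)
            + blkdiag (Pp x) (Pm x) * Pim x) *ᵥ v))
    -- (ii) boundary matrix positive semi-definite
    (hbdry : ∀ v : Fin m ⊕ Fin km → ℝ,
      0 ≤ v ⬝ᵥ ((blkdiag (fun i => Λp l i * Pp l i) (fun i => Λm 0 i * Pm 0 i)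
          - (1 + ξ) • (Kᵀ *
              blkdiag (fun i => Λp 0 i * Pp 0 i) (fun i => Λm l i * Pm l i) * K)) *ᵥ v))
    -- (iii) bound on the disturbance matrix
    (hnu : ∀ c : Fin m ⊕ Fin km → ℝ,
      c ⬝ᵥ ((Mᵀ * blkdiag (fun i => Λp 0 i * Pp 0 i) (fun i => Λm l i * Pm l i) * M)
        *ᵥ c) ≤ ν * ∑ i, (c i) ^ 2) :
    ∃ L' : ℝ → ℝ,
      (∀ t ∈ Set.Ici (0 : ℝ),
        HasDerivWithinAt
          (fun τ => ∫ x in (0 : ℝ)..l, W x τ ⬝ᵥ (blkdiag (Pp x) (Pm x) *ᵥ W x τ))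
          (L' t) (Set.Ici 0) t) ∧
      (∀ t ∈ Set.Ici (0 : ℝ),
        L' t ≤ -η * (∫ x in (0 : ℝ)..l, W x t ⬝ᵥ (blkdiag (Pp x) (Pm x) *ᵥ W x t))
          + ν * (1 + 1 / ξ) * ⨆ s : Set.Icc (0 : ℝ) t, ∑ i, (b (↑s) i) ^ 2) := by
  classical
  -- abbreviations (componentwise forms)
  have hpt : ∀ τ, (∫ x in (0:ℝ)..l, W x τ ⬝ᵥ (blkdiag (Pp x) (Pm x) *ᵥ W x τ))
      = ∫ x in (0:ℝ)..l, ∑ j, Sum.elim (Pp x) (Pm x) j * W x τ j ^ 2 := by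
    intro τ
    apply intervalIntegral.integral_congr
    intro x _
    simp only [dotProduct]
    exact Finset.sum_congr rfl fun j _ => by rw [blkdiag_mulVec]; ring
  -- the componentwise PDE
  have hpdec : ∀ x ∈ Set.Icc (0:ℝ) l, ∀ t ∈ Set.Ici (0:ℝ), ∀ j,
      Wt x t j = -(Sum.elim (Λp x) (fun i => -(Λm x i)) j * Wx x t j)
        - (Pim x *ᵥ W x t) j := by
    intro x hx t ht j
    have h := congrFun (hPDE x hx t ht) j
    simp only [Pi.add_apply, Pi.zero_apply, lamblk_mulVec] at h
    linarith
  -- the componentwise dissipation estimate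
  have hdissc : ∀ x ∈ Set.Icc (0:ℝ) l, ∀ v : Fin m ⊕ Fin km → ℝ,
      η * ∑ j, Sum.elim (Pp x) (Pm x) j * v j ^ 2 ≤
        -(∑ j, Sum.elim (Λp x) (fun i => -(Λm x i)) j * Sum.elim (Pp' x) (Pm' x) j * v j ^ 2)
          - (∑ j, Sum.elim (Λp' x) (fun i => -(Λm' x i)) j * Sum.elim (Pp x) (Pm x) j * v j ^ 2)
          + 2 * ∑ j, Sum.elim (Pp x) (Pm x) j * v j * (Pim x *ᵥ v) j := by
    intro x hx v
    have hd := hdiss x hx v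
    have hLHS : v ⬝ᵥ (blkdiag (Pp x) (Pm x) *ᵥ v)
        = ∑ j, Sum.elim (Pp x) (Pm x) j * v j ^ 2 := by
      simp only [dotProduct]
      exact Finset.sum_congr rfl fun j _ => by rw [blkdiag_mulVec]; ring
    simp only [Matrix.sub_mulVec, Matrix.add_mulVec, Matrix.neg_mulVec,
      dotProduct_add, dotProduct_sub, dotProduct_neg, ← Matrix.mulVec_mulVec] at hd
    have hT1 : v ⬝ᵥ ((Matrix.fromBlocks (Matrix.diagonal (Λp x)) 0 0
          (-(Matrix.diagonal (Λm x)))) *ᵥ (blkdiag (Pp' x) (Pm' x) *ᵥ v))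
        = ∑ j, Sum.elim (Λp x) (fun i => -(Λm x i)) j * Sum.elim (Pp' x) (Pm' x) j * v j ^ 2 := by
      simp only [dotProduct]
      exact Finset.sum_congr rfl fun j _ => by rw [lamblk_mulVec, blkdiag_mulVec]; ring
    have hT2 : v ⬝ᵥ ((Matrix.fromBlocks (Matrix.diagonal (Λp' x)) 0 0
          (-(Matrix.diagonal (Λm' x)))) *ᵥ (blkdiag (Pp x) (Pm x) *ᵥ v))
        = ∑ j, Sum.elim (Λp' x) (fun i => -(Λm' x i)) j * Sum.elim (Pp x) (Pm x) j * v j ^ 2 := by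
      simp only [dotProduct]
      exact Finset.sum_congr rfl fun j _ => by rw [lamblk_mulVec, blkdiag_mulVec]; ring
    have hT3 : v ⬝ᵥ ((Pim x)ᵀ *ᵥ (blkdiag (Pp x) (Pm x) *ᵥ v))
        = ∑ j, Sum.elim (Pp x) (Pm x) j * v j * (Pim x *ᵥ v) j := by
      rw [dotProduct_mulVec, vecMul_transpose]
      simp only [dotProduct]
      exact Finset.sum_congr rfl fun j _ => by rw [blkdiag_mulVec]; ring
    have hT4 : v ⬝ᵥ (blkdiag (Pp x) (Pm x) *ᵥ (Pim x *ᵥ v))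
        = ∑ j, Sum.elim (Pp x) (Pm x) j * v j * (Pim x *ᵥ v) j := by
      simp only [dotProduct]
      exact Finset.sum_congr rfl fun j _ => by rw [blkdiag_mulVec]; ring
    rw [hLHS, hT1, hT2, hT3, hT4] at hd
    linarith
  -- instantiate the generic lemma
  obtain ⟨L', hder, hbound⟩ := deriv_L (ι := Fin m ⊕ Fin km) hl
    (fun x => Sum.elim (Pp x) (Pm x)) (fun x => Sum.elim (Pp' x) (Pm' x))
    (fun x => Sum.elim (Λp x) (fun i => -(Λm x i)))
    (fun x => Sum.elim (Λp' x) (fun i => -(Λm' x i)))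
    Pim W Wt Wx η
    (fun x hx i => by cases i with
      | inl i => exact hPpderiv x hx i
      | inr i => exact hPmderiv x hx i)
    (fun x hx i => by cases i with
      | inl i => exact hΛpderiv x hx i
      | inr i => exact (hΛmderiv x hx i).neg)
    (fun i => by cases i with
      | inl i => exact hPp'cont i
      | inr i => exact hPm'cont i)
    (fun i => by cases i with
      | inl i => exact hΛp'cont i
      | inr i => exact (hΛm'cont i).neg)
    hWt hWx hWcont hWtcont hWxcont
    hpdec hdissc
  refine ⟨L', ?_, ?_⟩
  · intro t ht
    have hfun := funext hpt
    rw [hfun]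
    exact hder t ht
  · intro t ht
    rw [hpt t]
    have hb2 := hbound t ht
    -- boundary estimate
    have h0l : (0:ℝ) ∈ Set.Icc (0:ℝ) l := ⟨le_rfl, hl.le⟩
    have hll : l ∈ Set.Icc (0:ℝ) l := ⟨hl.le, le_rfl⟩
    set u : Fin m ⊕ Fin km → ℝ :=
      Sum.elim (fun i => W l t (Sum.inl i)) (fun i => W 0 t (Sum.inr i)) with hu_def
    set wv : Fin m ⊕ Fin km → ℝ :=
      Sum.elim (fun i => W 0 t (Sum.inl i)) (fun i => W l t (Sum.inr i)) with hw_def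
    have hw : wv = K *ᵥ u + M *ᵥ b t := hBC t ht
    set β : Fin m ⊕ Fin km → ℝ :=
      Sum.elim (fun i => Λp 0 i * Pp 0 i) (fun i => Λm l i * Pm l i) with hβ_def
    set γ : Fin m ⊕ Fin km → ℝ :=
      Sum.elim (fun i => Λp l i * Pp l i) (fun i => Λm 0 i * Pm 0 i) with hγ_def
    have hβnn : ∀ j, 0 ≤ β j := by
      intro j
      cases j with
      | inl i => exact (mul_pos (hΛppos 0 h0l i) (hPppos 0 h0l i)).le
      | inr i => exact (mul_pos (hΛmpos l hll i) (hPmpos l hll i)).le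
    have step1 : (∑ j, Sum.elim (Λp 0) (fun i => -(Λm 0 i)) j
          * Sum.elim (Pp 0) (Pm 0) j * W 0 t j ^ 2)
        - (∑ j, Sum.elim (Λp l) (fun i => -(Λm l i)) j
          * Sum.elim (Pp l) (Pm l) j * W l t j ^ 2)
        = (∑ j, β j * wv j ^ 2) - ∑ j, γ j * u j ^ 2 := by
      simp only [Fintype.sum_sum_type, hu_def, hw_def, hβ_def, hγ_def,
        Sum.elim_inl, Sum.elim_inr, neg_mul, Finset.sum_neg_distrib]
      ring
    have hYoung : (∑ j, β j * wv j ^ 2) ≤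
        (1 + ξ) * ∑ j, β j * ((K *ᵥ u) j) ^ 2
          + (1 + 1/ξ) * ∑ j, β j * ((M *ᵥ b t) j) ^ 2 := by
      rw [Finset.mul_sum, Finset.mul_sum, ← Finset.sum_add_distrib]
      refine Finset.sum_le_sum fun j _ => ?_
      have hwj : wv j = (K *ᵥ u) j + (M *ᵥ b t) j := by rw [hw]; rfl
      rw [hwj]
      calc β j * ((K *ᵥ u) j + (M *ᵥ b t) j) ^ 2
          ≤ β j * ((1 + ξ) * ((K *ᵥ u) j) ^ 2 + (1 + 1/ξ) * ((M *ᵥ b t) j) ^ 2) :=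
            mul_le_mul_of_nonneg_left (young_ineq hξ _ _) (hβnn j)
        _ = (1 + ξ) * (β j * ((K *ᵥ u) j) ^ 2)
            + (1 + 1/ξ) * (β j * ((M *ᵥ b t) j) ^ 2) := by ring
    have hB := hbdry u
    simp only [Matrix.sub_mulVec, dotProduct_sub, Matrix.smul_mulVec,
      dotProduct_smul, smul_eq_mul, ← Matrix.mulVec_mulVec] at hB
    have e1 : u ⬝ᵥ (blkdiag (fun i => Λp l i * Pp l i) (fun i => Λm 0 i * Pm 0 i) *ᵥ u)
        = ∑ j, γ j * u j ^ 2 := by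
      simp only [dotProduct]
      exact Finset.sum_congr rfl fun j _ => by
        rw [blkdiag_mulVec, hγ_def]; ring
    have e2 : u ⬝ᵥ (Kᵀ *ᵥ (blkdiag (fun i => Λp 0 i * Pp 0 i) (fun i => Λm l i * Pm l i)
          *ᵥ (K *ᵥ u))) = ∑ j, β j * ((K *ᵥ u) j) ^ 2 := by
      rw [dotProduct_mulVec, vecMul_transpose]
      simp only [dotProduct]
      exact Finset.sum_congr rfl fun j _ => by
        rw [blkdiag_mulVec, hβ_def]; ring
    rw [e1, e2] at hB
    have hN := hnu (b t)
    have e3 : (b t) ⬝ᵥ ((Mᵀ * blkdiag (fun i => Λp 0 i * Pp 0 i)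
          (fun i => Λm l i * Pm l i) * M) *ᵥ b t)
        = ∑ j, β j * ((M *ᵥ b t) j) ^ 2 := by
      simp only [← Matrix.mulVec_mulVec]
      rw [dotProduct_mulVec, vecMul_transpose]
      simp only [dotProduct]
      exact Finset.sum_congr rfl fun j _ => by
        rw [blkdiag_mulVec, hβ_def]; ring
    rw [e3] at hN
    have hsup : (∑ i, b t i ^ 2) ≤ ⨆ s : Set.Icc (0:ℝ) t, ∑ i, b (↑s) i ^ 2 := by
      have hc : ContinuousOn (fun s => ∑ i, b s i ^ 2) (Set.Icc 0 t) :=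
        continuousOn_finset_sum _ fun i _ => ((hbcont i).mono (fun s hs => hs.1)).pow 2
      have hbd : BddAbove (Set.range fun s : Set.Icc (0:ℝ) t => ∑ i, b (↑s) i ^ 2) := by
        have him := (isCompact_Icc.image_of_continuousOn hc).bddAbove
        rwa [Set.image_eq_range] at him
      exact le_ciSup hbd ⟨t, ht, le_rfl⟩
    have hν1 : (0:ℝ) < 1 + 1/ξ := by positivity
    have h5 : (1 + 1/ξ) * (∑ j, β j * ((M *ᵥ b t) j) ^ 2)
        ≤ (1 + 1/ξ) * (ν * ∑ i, b t i ^ 2) :=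
      mul_le_mul_of_nonneg_left hN hν1.le
    have h6 : ν * (1 + 1/ξ) * (∑ i, b t i ^ 2)
        ≤ ν * (1 + 1/ξ) * ⨆ s : Set.Icc (0:ℝ) t, ∑ i, b (↑s) i ^ 2 :=
      mul_le_mul_of_nonneg_left hsup (by positivity)
    linarith
end

section
/- Let l > 0 and 0 < m < k. Let Λ(x) = diag(Λ⁺(x), −Λ⁻(x)) where Λ⁺ : [0,l] → ℝ^{m×m} and Λ⁻ : [0,l] → ℝ^{(k−m)×(k−m)} are continuously differentiable diagonal-matrix-valued functions with strictly positive diagonal entries, let Π : [0,l] → ℝ^{k×k} be continuous, let P(x) = diag(P⁺(x), P⁻(x)) be a continuously differentiable diagonal-matrix-valued weight whose diagonal entries all lie in [ζ, β] with 0 < ζ ≤ β, let K, M ∈ ℝ^{k×k} with M diagonal, let b : [0,∞) → ℝ^k be continuous, and let ξ > 0. Let W : [0,l] × [0,∞) → ℝ^k, written W = (W⁺, W⁻), be a continuously differentiable solution of ∂ₜW + Λ(x)∂ₓW + Π(x)W = 0 satisfying (W⁺(0,t), W⁻(l,t)) = K·(W⁺(l,t), W⁻(0,t)) + M·b(t)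 for all t ≥ 0. Assume: (i) there is η > 0 such that for all x ∈ [0,l] and v ∈ ℝ^k, vᵀ( −Λ(x)P′(x) − Λ′(x)P(x) + Π(x)ᵀP(x) + P(x)Π(x) )v ≥ η·vᵀP(x)v; (ii) diag(Λ⁺(l)P⁺(l), Λ⁻(0)P⁻(0)) − (1 + ξ)·Kᵀ·diag(Λ⁺(0)P⁺(0), Λ⁻(l)P⁻(l))·K is positive semi-definite; (iii) ν > 0 satisfies cᵀMᵀ·diag(Λ⁺(0)P⁺(0), Λ⁻(l)P⁻(l))·Mc ≤ ν·|c|² for all c ∈ ℝ^k. Then for all t ≥ 0, ∫₀ˡ |W(x,t)|² dx ≤ (β/ζ)·e^{−η t}·∫₀ˡ |W(x,0)|² dx + (ν/(ζ·η))·(1 + 1/ξ)·sup_{s∈[0,t]} |b(s)|², i.e. the zero steady state is input-to-state stable in the L²-norm with respect to the disturbance b. -/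
open Matrix MeasureTheory Topology

lemma dot_diag_mulVec {ι : Type*} [Fintype ι] [DecidableEq ι] (d v w : ι → ℝ) :
    v ⬝ᵥ (Matrix.diagonal d *ᵥ w) = ∑ i, d i * v i * w i := by
  simp only [dotProduct, mulVec_diagonal]
  exact Finset.sum_congr rfl fun i _ => by ring

lemma quad_transpose_diag {ι : Type*} [Fintype ι] [DecidableEq ι]
    (d : ι → ℝ) (P : Matrix ι ι ℝ) (v : ι → ℝ) :
    v ⬝ᵥ ((Pᵀ * Matrix.diagonal d) *ᵥ v) = ∑ i, d i * (P *ᵥ v) i * v i := by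
  rw [← mulVec_mulVec, Matrix.dotProduct_mulVec, Matrix.vecMul_transpose]
  exact dot_diag_mulVec d (P *ᵥ v) v

lemma quad_diag_mul {ι : Type*} [Fintype ι] [DecidableEq ι]
    (d : ι → ℝ) (P : Matrix ι ι ℝ) (v : ι → ℝ) :
    v ⬝ᵥ ((Matrix.diagonal d * P) *ᵥ v) = ∑ i, d i * v i * (P *ᵥ v) i := by
  rw [← mulVec_mulVec]
  exact dot_diag_mulVec d v (P *ᵥ v)

lemma quad_KDK {ι : Type*} [Fintype ι] [DecidableEq ι]
    (K : Matrix ι ι ℝ) (d : ι → ℝ) (v : ι → ℝ) :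
    v ⬝ᵥ ((Kᵀ * Matrix.diagonal d * K) *ᵥ v) = ∑ i, d i * (K *ᵥ v) i ^ 2 := by
  rw [Matrix.mul_assoc, ← mulVec_mulVec, Matrix.dotProduct_mulVec,
    Matrix.vecMul_transpose, ← mulVec_mulVec, dot_diag_mulVec]
  exact Finset.sum_congr rfl fun i _ => by ring

lemma young_sq {ξ : ℝ} (hξ : 0 < ξ) (a b : ℝ) :
    (a + b) ^ 2 ≤ (1 + ξ) * a ^ 2 + (1 + 1/ξ) * b ^ 2 := by
  rw [← sub_nonneg]
  have h : (1+ξ)*a^2 + (1+1/ξ)*b^2 - (a+b)^2 = (ξ*a - b)^2/ξ := by field_simp; ring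
  rw [h]; positivity

lemma energy_decay (l T η C : ℝ) (hl : 0 ≤ l) (hT : 0 ≤ T) (hη : 0 < η) (hC : 0 ≤ C)
    (ee et ff ffx : ℝ → ℝ → ℝ)
    (heeC : ContinuousOn (fun p : ℝ × ℝ => ee p.1 p.2) (Set.Icc 0 l ×ˢ Set.Ici 0))
    (hetC : ContinuousOn (fun p : ℝ × ℝ => et p.1 p.2) (Set.Icc 0 l ×ˢ Set.Ici 0))
    (hffxC : ∀ t ∈ Set.Ici (0:ℝ), ContinuousOn (fun x => ffx x t) (Set.Icc 0 l))
    (heet : ∀ x ∈ Set.Icc (0:ℝ) l, ∀ t ∈ Set.Ici (0:ℝ),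
      HasDerivWithinAt (ee x) (et x t) (Set.Ici 0) t)
    (hffd : ∀ t ∈ Set.Ici (0:ℝ), ∀ x ∈ Set.Icc (0:ℝ) l,
      HasDerivWithinAt (fun y => ff y t) (ffx x t) (Set.Icc 0 l) x)
    (hpt : ∀ x ∈ Set.Icc (0:ℝ) l, ∀ t ∈ Set.Icc (0:ℝ) T, et x t + ffx x t ≤ -η * ee x t)
    (hbnd : ∀ t ∈ Set.Icc (0:ℝ) T, ff 0 t - ff l t ≤ C) :
    (∫ x in (0:ℝ)..l, ee x T) ≤ (∫ x in (0:ℝ)..l, ee x 0) * Real.exp (-η * T) + C / η := by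
  set V : ℝ → ℝ := fun t => ∫ x in (0:ℝ)..l, ee x t with hV
  set g : ℝ → ℝ := fun t => ∫ x in (0:ℝ)..l, et x t with hg
  -- slice continuity
  have heex : ∀ t ∈ Set.Ici (0:ℝ), ContinuousOn (fun x => ee x t) (Set.Icc 0 l) := by
    intro t ht
    exact heeC.comp (f := fun x => (x, t)) (Continuous.continuousOn (by fun_prop))
      (fun x hx => ⟨hx, ht⟩)
  have hetx : ∀ t ∈ Set.Ici (0:ℝ), ContinuousOn (fun x => et x t) (Set.Icc 0 l) := by
    intro t ht
    exact hetC.comp (f := fun x => (x, t)) (Continuous.continuousOn (by fun_prop))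
      (fun x hx => ⟨hx, ht⟩)
  have hett : ∀ x ∈ Set.Icc (0:ℝ) l, ContinuousOn (fun t => et x t) (Set.Ici 0) := by
    intro x hx
    exact hetC.comp (f := fun t => (x, t)) (Continuous.continuousOn (by fun_prop))
      (fun t ht => ⟨hx, ht⟩)
  have hIee : ∀ t ∈ Set.Ici (0:ℝ), IntervalIntegrable (fun x => ee x t) volume 0 l :=
    fun t ht => (heex t ht).intervalIntegrable_of_Icc hl
  have hIet : ∀ t ∈ Set.Ici (0:ℝ), IntervalIntegrable (fun x => et x t) volume 0 l :=
    fun t ht => (hetx t ht).intervalIntegrable_of_Icc hl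
  have hIffx : ∀ t ∈ Set.Ici (0:ℝ), IntervalIntegrable (fun x => ffx x t) volume 0 l :=
    fun t ht => (hffxC t ht).intervalIntegrable_of_Icc hl
  -- time FTC for fixed x
  have hFTCt : ∀ t ∈ Set.Ici (0:ℝ), ∀ x ∈ Set.Icc (0:ℝ) l,
      ∫ s in (0:ℝ)..t, et x s = ee x t - ee x 0 := by
    intro t ht x hx
    apply intervalIntegral.integral_eq_sub_of_hasDeriv_right_of_le ht
    · intro s hs
      exact ((heet x hx s hs.1).continuousWithinAt).mono (fun u hu => hu.1)
    · intro s hs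
      exact (heet x hx s hs.1.le).mono (fun u hu => le_trans hs.1.le (le_of_lt hu))
    · exact ((hett x hx).mono (fun u hu => hu.1)).intervalIntegrable_of_Icc ht
  -- Fubini identity : V t = V 0 + ∫ g
  have hVg : ∀ t ∈ Set.Ici (0:ℝ), V t = V 0 + ∫ s in (0:ℝ)..t, g s := by
    intro t ht
    have hInt : Integrable (Function.uncurry fun s x => et x s)
        ((volume.restrict (Set.Ioc 0 t)).prod (volume.restrict (Set.Ioc 0 l))) := by
      rw [MeasureTheory.Measure.prod_restrict]
      have hc : ContinuousOn (fun z : ℝ × ℝ => et z.2 z.1)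
          (Set.Icc 0 t ×ˢ Set.Icc 0 l) := by
        exact hetC.comp (f := fun z : ℝ × ℝ => (z.2, z.1))
          (Continuous.continuousOn (by fun_prop)) (fun z hz => ⟨hz.2, hz.1.1⟩)
      have := hc.integrableOn_compact (μ := volume.prod volume)
        (isCompact_Icc.prod isCompact_Icc)
      exact (this.mono_set (Set.prod_mono Set.Ioc_subset_Icc_self Set.Ioc_subset_Icc_self))
    have swap : ∫ s in (0:ℝ)..t, g s = ∫ x in (0:ℝ)..l, (ee x t - ee x 0) := by
      rw [intervalIntegral.integral_of_le ht, intervalIntegral.integral_of_le hl]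
      have : ∀ s, g s = ∫ x in Set.Ioc (0:ℝ) l, et x s := by
        intro s; rw [hg]; exact intervalIntegral.integral_of_le hl
      calc ∫ s in Set.Ioc (0:ℝ) t, g s
          = ∫ s in Set.Ioc (0:ℝ) t, ∫ x in Set.Ioc (0:ℝ) l, et x s := by
            exact integral_congr_ae (Filter.Eventually.of_forall this)
        _ = ∫ x in Set.Ioc (0:ℝ) l, ∫ s in Set.Ioc (0:ℝ) t, et x s :=
            MeasureTheory.integral_integral_swap hInt
        _ = ∫ x in Set.Ioc (0:ℝ) l, (ee x t - ee x 0) := by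
            apply setIntegral_congr_fun measurableSet_Ioc
            intro x hx
            dsimp only
            rw [← intervalIntegral.integral_of_le ht]
            exact hFTCt t ht x (Set.Ioc_subset_Icc_self hx)
    have hsub : ∫ x in (0:ℝ)..l, (ee x t - ee x 0)
        = V t - V 0 := intervalIntegral.integral_sub (hIee t ht) (hIee 0 Set.self_mem_Ici)
    rw [swap, hsub]; ring
  -- continuity of g on Ici 0
  have hgc : ContinuousOn g (Set.Ici 0) := by
    intro t₀ ht₀
    obtain ⟨Cb, hCb⟩ := (isCompact_Icc.prod isCompact_Icc).exists_bound_of_continuousOn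
      (s := Set.Icc (0:ℝ) l ×ˢ Set.Icc (0:ℝ) (t₀ + 1))
      (hetC.mono (Set.prod_mono subset_rfl (fun u hu => hu.1)))
    apply intervalIntegral.continuousWithinAt_of_dominated_interval
      (bound := fun _ => Cb) (F := fun t x => et x t)
    · filter_upwards [self_mem_nhdsWithin] with t ht
      have hm : ContinuousOn (fun x => et x t) (Set.uIoc 0 l) := by
        rw [Set.uIoc_of_le hl]
        exact (hetx t ht).mono Set.Ioc_subset_Icc_self
      exact hm.aestronglyMeasurable (by rw [Set.uIoc_of_le hl]; exact measurableSet_Ioc)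
    · have h1 : ∀ᶠ t in 𝓝[Set.Ici 0] t₀, t ∈ Set.Ici (0:ℝ) := self_mem_nhdsWithin
      have h2 : ∀ᶠ t in 𝓝[Set.Ici 0] t₀, t < t₀ + 1 :=
        eventually_nhdsWithin_of_eventually_nhds
          (Filter.Tendsto.eventually_lt_const (by linarith) Filter.tendsto_id)
      filter_upwards [h1, h2] with t ht ht'
      apply Filter.Eventually.of_forall
      intro x hx
      rw [Set.uIoc_of_le hl] at hx
      exact hCb (x, t) ⟨Set.Ioc_subset_Icc_self hx, ⟨ht, ht'.le⟩⟩
    · exact intervalIntegrable_const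
    · apply Filter.Eventually.of_forall
      intro x hx
      rw [Set.uIoc_of_le hl] at hx
      exact (hett x (Set.Ioc_subset_Icc_self hx)).continuousWithinAt ht₀
  -- continuity of V on Icc 0 T
  have hgcT : ContinuousOn g (Set.Icc 0 T) := hgc.mono (fun u hu => hu.1)
  have hVc : ContinuousOn V (Set.Icc 0 T) := by
    have hprim : ContinuousOn (fun t => V 0 + ∫ s in (0:ℝ)..t, g s) (Set.Icc 0 T) := by
      apply continuousOn_const.add
      have : IntegrableOn g (Set.uIcc 0 T) volume := by
        rw [Set.uIcc_of_le hT]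
        exact hgcT.integrableOn_compact isCompact_Icc
      exact (intervalIntegral.continuousOn_primitive_interval this).mono
        (by rw [Set.uIcc_of_le hT])
    exact hprim.congr (fun u hu => hVg u hu.1)
  -- right derivative of V
  have hVd : ∀ t ∈ Set.Ico (0:ℝ) T, HasDerivWithinAt V (g t) (Set.Ici t) t := by
    intro t ht
    have hint : IntervalIntegrable g volume 0 t :=
      (hgc.mono (fun u hu => hu.1)).intervalIntegrable_of_Icc ht.1
    have hmeas : StronglyMeasurableAtFilter g (𝓝[Set.Ioi t] t) := by
      refine ⟨Set.Ici 0, ?_, hgc.aestronglyMeasurable measurableSet_Ici⟩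
      exact Filter.mem_of_superset self_mem_nhdsWithin
        (fun u hu => le_trans ht.1 (le_of_lt hu))
    have hcw : ContinuousWithinAt g (Set.Ioi t) t :=
      ((hgc t ht.1).mono (fun u hu => le_trans ht.1 (le_of_lt hu)))
    have hD : HasDerivWithinAt (fun u => V 0 + ∫ s in (0:ℝ)..u, g s) (g t) (Set.Ici t) t :=
      (intervalIntegral.integral_hasDerivWithinAt_right hint hmeas hcw).const_add (V 0)
    exact hD.congr (fun u hu => hVg u (le_trans ht.1 hu)) (hVg t ht.1)
  -- spatial FTC
  have hFTCx : ∀ t ∈ Set.Ici (0:ℝ), ∫ x in (0:ℝ)..l, ffx x t = ff l t - ff 0 t := by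
    intro t ht
    apply intervalIntegral.integral_eq_sub_of_hasDeriv_right_of_le hl
    · exact fun x hx => (hffd t ht x hx).continuousWithinAt
    · intro x hx
      exact ((hffd t ht x (Set.Ioo_subset_Icc_self hx)).hasDerivAt
        (Icc_mem_nhds hx.1 hx.2)).hasDerivWithinAt
    · exact hIffx t ht
  -- differential inequality
  have hbound : ∀ t ∈ Set.Ico (0:ℝ) T, g t ≤ -η * V t + C := by
    intro t ht
    have ht' : t ∈ Set.Ici (0:ℝ) := ht.1
    have hmono : g t ≤ ∫ x in (0:ℝ)..l, (-η * ee x t - ffx x t) := by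
      apply intervalIntegral.integral_mono_on hl (hIet t ht')
      · exact (((hIee t ht').const_mul (-η)).sub (hIffx t ht'))
      · intro x hx
        have := hpt x hx t ⟨ht.1, ht.2.le⟩
        linarith
    have hsplit : ∫ x in (0:ℝ)..l, (-η * ee x t - ffx x t)
        = -η * V t - (ff l t - ff 0 t) := by
      rw [intervalIntegral.integral_sub ((hIee t ht').const_mul (-η)) (hIffx t ht'),
        intervalIntegral.integral_const_mul, hFTCx t ht']
    have := hbnd t ⟨ht.1, ht.2.le⟩
    linarith [hmono, hsplit]
  -- Grönwall
  have hgron := le_gronwallBound_of_liminf_deriv_right_le (f := V) (f' := g)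
    (δ := V 0) (K := -η) (ε := C) hVc
    (fun x hx r hr => (hVd x hx).liminf_right_slope_le hr)
    le_rfl hbound T (Set.right_mem_Icc.2 hT)
  rw [gronwallBound_of_K_ne_0 (neg_ne_zero.2 hη.ne')] at hgron
  have hE : (0:ℝ) < Real.exp (-η * T) := Real.exp_pos _
  have h1 : C / -η * (Real.exp (-η * (T - 0)) - 1) = C/η - C/η * Real.exp (-η * T) := by
    rw [sub_zero, div_neg]; ring
  have h2 : 0 ≤ C / η * Real.exp (-η * T) := by positivity
  rw [sub_zero] at hgron
  calc V T ≤ V 0 * Real.exp (-η * T) + C / -η * (Real.exp (-η * (T-0)) - 1) := by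
        rw [sub_zero]; exact hgron
    _ ≤ V 0 * Real.exp (-η * T) + C / η := by rw [h1]; linarith

lemma blkdiag_eq {m km : ℕ} (a : Fin m → ℝ) (c : Fin km → ℝ) :
    blkdiag a c = Matrix.diagonal (Sum.elim a c) :=
  Matrix.fromBlocks_diagonal a c

theorem iss_in_L2_norm (m km : ℕ) (hm : 0 < m) (hkm : 0 < km)
    (l : ℝ) (hl : 0 < l)
    (Λp Λp' Pp Pp' : ℝ → Fin m → ℝ) (Λm Λm' Pm Pm' : ℝ → Fin km → ℝ)
    (Pim : ℝ → Matrix (Fin m ⊕ Fin km) (Fin m ⊕ Fin km) ℝ)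
    (K M : Matrix (Fin m ⊕ Fin km) (Fin m ⊕ Fin km) ℝ) (hM : M.IsDiag)
    (b : ℝ → Fin m ⊕ Fin km → ℝ)
    (ξ η ν ζ β : ℝ) (hξ : 0 < ξ) (hη : 0 < η) (hν : 0 < ν)
    (hζ : 0 < ζ) (hζβ : ζ ≤ β)
    -- regularity and positivity of the coefficients
    (hΛpderiv : ∀ x ∈ Set.Icc (0 : ℝ) l, ∀ i,
      HasDerivWithinAt (fun y => Λp y i) (Λp' x i) (Set.Icc 0 l) x)
    (hΛmderiv : ∀ x ∈ Set.Icc (0 : ℝ) l, ∀ i,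
      HasDerivWithinAt (fun y => Λm y i) (Λm' x i) (Set.Icc 0 l) x)
    (hΛp'cont : ∀ i, ContinuousOn (fun x => Λp' x i) (Set.Icc 0 l))
    (hΛm'cont : ∀ i, ContinuousOn (fun x => Λm' x i) (Set.Icc 0 l))
    (hΛppos : ∀ x ∈ Set.Icc (0 : ℝ) l, ∀ i, 0 < Λp x i)
    (hΛmpos : ∀ x ∈ Set.Icc (0 : ℝ) l, ∀ i, 0 < Λm x i)
    (hPpderiv : ∀ x ∈ Set.Icc (0 : ℝ) l, ∀ i,
      HasDerivWithinAt (fun y => Pp y i) (Pp' x i) (Set.Icc 0 l) x)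
    (hPmderiv : ∀ x ∈ Set.Icc (0 : ℝ) l, ∀ i,
      HasDerivWithinAt (fun y => Pm y i) (Pm' x i) (Set.Icc 0 l) x)
    (hPp'cont : ∀ i, ContinuousOn (fun x => Pp' x i) (Set.Icc 0 l))
    (hPm'cont : ∀ i, ContinuousOn (fun x => Pm' x i) (Set.Icc 0 l))
    (hPpbound : ∀ x ∈ Set.Icc (0 : ℝ) l, ∀ i, Pp x i ∈ Set.Icc ζ β)
    (hPmbound : ∀ x ∈ Set.Icc (0 : ℝ) l, ∀ i, Pm x i ∈ Set.Icc ζ β)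
    (hPimcont : ∀ i j, ContinuousOn (fun x => Pim x i j) (Set.Icc 0 l))
    (hbcont : ∀ i, ContinuousOn (fun t => b t i) (Set.Ici 0))
    -- the C¹ solution of the balance law
    (W Wt Wx : ℝ → ℝ → Fin m ⊕ Fin km → ℝ)
    (hWt : ∀ x ∈ Set.Icc (0 : ℝ) l, ∀ t ∈ Set.Ici (0 : ℝ), ∀ i,
      HasDerivWithinAt (fun τ => W x τ i) (Wt x t i) (Set.Ici 0) t)
    (hWx : ∀ x ∈ Set.Icc (0 : ℝ) l, ∀ t ∈ Set.Ici (0 : ℝ), ∀ i,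
      HasDerivWithinAt (fun y => W y t i) (Wx x t i) (Set.Icc 0 l) x)
    (hWcont : ∀ i, ContinuousOn (fun p : ℝ × ℝ => W p.1 p.2 i)
      (Set.Icc 0 l ×ˢ Set.Ici 0))
    (hWtcont : ∀ i, ContinuousOn (fun p : ℝ × ℝ => Wt p.1 p.2 i)
      (Set.Icc 0 l ×ˢ Set.Ici 0))
    (hWxcont : ∀ i, ContinuousOn (fun p : ℝ × ℝ => Wx p.1 p.2 i)
      (Set.Icc 0 l ×ˢ Set.Ici 0))
    (hPDE : ∀ x ∈ Set.Icc (0 : ℝ) l, ∀ t ∈ Set.Ici (0 : ℝ),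
      Wt x t + (Matrix.fromBlocks (Matrix.diagonal (Λp x)) 0 0
        (-(Matrix.diagonal (Λm x)))) *ᵥ Wx x t + Pim x *ᵥ W x t = 0)
    -- boundary conditions with disturbance
    (hBC : ∀ t ∈ Set.Ici (0 : ℝ),
      Sum.elim (fun i => W 0 t (Sum.inl i)) (fun i => W l t (Sum.inr i)) =
        K *ᵥ Sum.elim (fun i => W l t (Sum.inl i)) (fun i => W 0 t (Sum.inr i))
          + M *ᵥ b t)
    -- (i) interior dissipativity
    (hdiss : ∀ x ∈ Set.Icc (0 : ℝ) l, ∀ v : Fin m ⊕ Fin km → ℝ,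
      η * (v ⬝ᵥ (blkdiag (Pp x) (Pm x) *ᵥ v)) ≤
        v ⬝ᵥ ((-( (Matrix.fromBlocks (Matrix.diagonal (Λp x)) 0 0
                  (-(Matrix.diagonal (Λm x)))) * blkdiag (Pp' x) (Pm' x))
            - (Matrix.fromBlocks (Matrix.diagonal (Λp' x)) 0 0
                  (-(Matrix.diagonal (Λm' x)))) * blkdiag (Pp x) (Pm x)
            + (Pim x)ᵀ * blkdiag (Pp x) (Pm x)
            + blkdiag (Pp x) (Pm x) * Pim x) *ᵥ v))
    -- (ii) boundary matrix positive semi-definite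
    (hbdry : ∀ v : Fin m ⊕ Fin km → ℝ,
      0 ≤ v ⬝ᵥ ((blkdiag (fun i => Λp l i * Pp l i) (fun i => Λm 0 i * Pm 0 i)
          - (1 + ξ) • (Kᵀ *
              blkdiag (fun i => Λp 0 i * Pp 0 i) (fun i => Λm l i * Pm l i) * K)) *ᵥ v))
    -- (iii) bound on the disturbance matrix
    (hnu : ∀ c : Fin m ⊕ Fin km → ℝ,
      c ⬝ᵥ ((Mᵀ * blkdiag (fun i => Λp 0 i * Pp 0 i) (fun i => Λm l i * Pm l i) * M)
        *ᵥ c) ≤ ν * ∑ i, (c i) ^ 2) :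
    ∀ t ∈ Set.Ici (0 : ℝ),
      (∫ x in (0 : ℝ)..l, ∑ i, (W x t i) ^ 2) ≤
        (β / ζ) * Real.exp (-η * t) * (∫ x in (0 : ℝ)..l, ∑ i, (W x 0 i) ^ 2)
          + (ν / (ζ * η)) * (1 + 1 / ξ) *
              ⨆ s : Set.Icc (0 : ℝ) t, ∑ i, (b (↑s) i) ^ 2 := by
  intro T hT
  replace hT : (0:ℝ) ≤ T := hT
  have h0l : (0:ℝ) ∈ Set.Icc (0:ℝ) l := ⟨le_rfl, hl.le⟩
  have hll : l ∈ Set.Icc (0:ℝ) l := ⟨hl.le, le_rfl⟩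
  -- scalar coefficient facts
  have hqD : ∀ x ∈ Set.Icc (0:ℝ) l, ∀ i, HasDerivWithinAt
      (fun y => Sum.elim (Pp y) (Pm y) i) (Sum.elim (Pp' x) (Pm' x) i) (Set.Icc 0 l) x := by
    intro x hx i
    cases i with
    | inl j => simpa using hPpderiv x hx j
    | inr j => simpa using hPmderiv x hx j
  have hlamD : ∀ x ∈ Set.Icc (0:ℝ) l, ∀ i, HasDerivWithinAt
      (fun y => Sum.elim (Λp y) (fun j => -Λm y j) i)
      (Sum.elim (Λp' x) (fun j => -Λm' x j) i) (Set.Icc 0 l) x := by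
    intro x hx i
    cases i with
    | inl j => simpa using hΛpderiv x hx j
    | inr j => exact (hΛmderiv x hx j).neg
  have hqC : ∀ i, ContinuousOn (fun x => Sum.elim (Pp x) (Pm x) i) (Set.Icc 0 l) :=
    fun i x hx => (hqD x hx i).continuousWithinAt
  have hlamC : ∀ i, ContinuousOn (fun x => Sum.elim (Λp x) (fun j => -Λm x j) i)
      (Set.Icc 0 l) := fun i x hx => (hlamD x hx i).continuousWithinAt
  have hq'C : ∀ i, ContinuousOn (fun x => Sum.elim (Pp' x) (Pm' x) i) (Set.Icc 0 l) := by
    intro i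
    cases i with
    | inl j => simpa using hPp'cont j
    | inr j => simpa using hPm'cont j
  have hlam'C : ∀ i, ContinuousOn (fun x => Sum.elim (Λp' x) (fun j => -Λm' x j) i)
      (Set.Icc 0 l) := by
    intro i
    cases i with
    | inl j => simpa using hΛp'cont j
    | inr j => exact (hΛm'cont j).neg
  have hqlb : ∀ x ∈ Set.Icc (0:ℝ) l, ∀ i, ζ ≤ Sum.elim (Pp x) (Pm x) i := by
    intro x hx i
    cases i with
    | inl j => exact (hPpbound x hx j).1
    | inr j => exact (hPmbound x hx j).1
  have hqub : ∀ x ∈ Set.Icc (0:ℝ) l, ∀ i, Sum.elim (Pp x) (Pm x) i ≤ β := by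
    intro x hx i
    cases i with
    | inl j => exact (hPpbound x hx j).2
    | inr j => exact (hPmbound x hx j).2
  -- slice continuity of the solution
  have hWsl : ∀ t ∈ Set.Ici (0:ℝ), ∀ i, ContinuousOn (fun x => W x t i)
      (Set.Icc 0 l) := by
    intro t ht i
    exact (hWcont i).comp (f := fun x => (x, t)) (Continuous.continuousOn (by fun_prop))
      (fun x hx => ⟨hx, ht⟩)
  have hWxsl : ∀ t ∈ Set.Ici (0:ℝ), ∀ i, ContinuousOn (fun x => Wx x t i)
      (Set.Icc 0 l) := by
    intro t ht i
    exact (hWxcont i).comp (f := fun x => (x, t)) (Continuous.continuousOn (by fun_prop))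
      (fun x hx => ⟨hx, ht⟩)
  have hqCP : ∀ i, ContinuousOn (fun p : ℝ × ℝ => Sum.elim (Pp p.1) (Pm p.1) i)
      (Set.Icc 0 l ×ˢ Set.Ici 0) :=
    fun i => (hqC i).comp continuousOn_fst (fun p hp => hp.1)
  -- the sup of the disturbance
  have hBsqC : ContinuousOn (fun s => ∑ i, b s i ^ 2) (Set.Icc 0 T) :=
    continuousOn_finset_sum _ fun i _ => ((hbcont i).mono (fun u hu => hu.1)).pow 2
  have hbdd : BddAbove (Set.range fun s : Set.Icc (0:ℝ) T => ∑ i, b (↑s) i ^ 2) := by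
    have h := (isCompact_Icc.image_of_continuousOn hBsqC).bddAbove
    rw [Set.image_eq_range] at h
    simpa using h
  set Sb : ℝ := ⨆ s : Set.Icc (0:ℝ) T, ∑ i, b (↑s) i ^ 2 with hSb
  have hSle : ∀ s ∈ Set.Icc (0:ℝ) T, (∑ i, b s i ^ 2) ≤ Sb :=
    fun s hs => le_ciSup hbdd ⟨s, hs⟩
  have hS0 : 0 ≤ Sb := le_trans (by positivity) (hSle 0 ⟨le_rfl, hT⟩)
  -- the four energy functions
  have heeC : ContinuousOn (fun p : ℝ × ℝ =>
      ∑ i, Sum.elim (Pp p.1) (Pm p.1) i * W p.1 p.2 i ^ 2) (Set.Icc 0 l ×ˢ Set.Ici 0) :=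
    continuousOn_finset_sum _ fun i _ => (hqCP i).mul ((hWcont i).pow 2)
  have hetC : ContinuousOn (fun p : ℝ × ℝ =>
      ∑ i, 2 * Sum.elim (Pp p.1) (Pm p.1) i * W p.1 p.2 i * Wt p.1 p.2 i)
      (Set.Icc 0 l ×ˢ Set.Ici 0) :=
    continuousOn_finset_sum _ fun i _ =>
      ((continuousOn_const.mul (hqCP i)).mul (hWcont i)).mul (hWtcont i)
  have hffxC : ∀ t ∈ Set.Ici (0:ℝ), ContinuousOn (fun x =>
      ∑ i, ((Sum.elim (Λp' x) (fun j => -Λm' x j) i * Sum.elim (Pp x) (Pm x) i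
          + Sum.elim (Λp x) (fun j => -Λm x j) i * Sum.elim (Pp' x) (Pm' x) i)
            * W x t i ^ 2
        + 2 * (Sum.elim (Λp x) (fun j => -Λm x j) i * Sum.elim (Pp x) (Pm x) i)
            * W x t i * Wx x t i)) (Set.Icc 0 l) := by
    intro t ht
    apply continuousOn_finset_sum _ fun i _ => ContinuousOn.add ?_ ?_
    · exact (((hlam'C i).mul (hqC i)).add ((hlamC i).mul (hq'C i))).mul
        ((hWsl t ht i).pow 2)
    · exact ((continuousOn_const.mul ((hlamC i).mul (hqC i))).mul (hWsl t ht i)).mul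
        (hWxsl t ht i)
  have heet : ∀ x ∈ Set.Icc (0:ℝ) l, ∀ t ∈ Set.Ici (0:ℝ), HasDerivWithinAt
      (fun τ => ∑ i, Sum.elim (Pp x) (Pm x) i * W x τ i ^ 2)
      (∑ i, 2 * Sum.elim (Pp x) (Pm x) i * W x t i * Wt x t i) (Set.Ici 0) t := by
    intro x hx t ht
    have h := HasDerivWithinAt.fun_sum (u := Finset.univ)
      (A := fun i => fun τ => Sum.elim (Pp x) (Pm x) i * W x τ i ^ 2)
      (A' := fun i => Sum.elim (Pp x) (Pm x) i * ((2:ℕ) * W x t i ^ 1 * Wt x t i))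
      (fun i _ => ((hWt x hx t ht i).pow 2).const_mul _)
    refine h.congr_deriv ?_
    exact (Finset.sum_congr rfl fun i _ => by push_cast; ring).symm
  have hffd : ∀ t ∈ Set.Ici (0:ℝ), ∀ x ∈ Set.Icc (0:ℝ) l, HasDerivWithinAt
      (fun y => ∑ i, Sum.elim (Λp y) (fun j => -Λm y j) i * Sum.elim (Pp y) (Pm y) i
          * W y t i ^ 2)
      (∑ i, ((Sum.elim (Λp' x) (fun j => -Λm' x j) i * Sum.elim (Pp x) (Pm x) i
          + Sum.elim (Λp x) (fun j => -Λm x j) i * Sum.elim (Pp' x) (Pm' x) i)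
            * W x t i ^ 2
        + 2 * (Sum.elim (Λp x) (fun j => -Λm x j) i * Sum.elim (Pp x) (Pm x) i)
            * W x t i * Wx x t i)) (Set.Icc 0 l) x := by
    intro t ht x hx
    have h := HasDerivWithinAt.fun_sum (u := Finset.univ)
      (A := fun i => fun y => Sum.elim (Λp y) (fun j => -Λm y j) i
          * Sum.elim (Pp y) (Pm y) i * W y t i ^ 2)
      (A' := fun i =>
        (Sum.elim (Λp' x) (fun j => -Λm' x j) i * Sum.elim (Pp x) (Pm x) i
          + Sum.elim (Λp x) (fun j => -Λm x j) i * Sum.elim (Pp' x) (Pm' x) i)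
            * W x t i ^ 2
        + Sum.elim (Λp x) (fun j => -Λm x j) i * Sum.elim (Pp x) (Pm x) i
            * ((2:ℕ) * W x t i ^ 1 * Wx x t i))
      (fun i _ => ((hlamD x hx i).mul (hqD x hx i)).mul ((hWx x hx t ht i).pow 2))
    refine h.congr_deriv ?_
    exact (Finset.sum_congr rfl fun i _ => by push_cast; ring).symm
  -- pointwise dissipation inequality
  have hpt : ∀ x ∈ Set.Icc (0:ℝ) l, ∀ t ∈ Set.Icc (0:ℝ) T,
      (∑ i, 2 * Sum.elim (Pp x) (Pm x) i * W x t i * Wt x t i)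
      + (∑ i, ((Sum.elim (Λp' x) (fun j => -Λm' x j) i * Sum.elim (Pp x) (Pm x) i
          + Sum.elim (Λp x) (fun j => -Λm x j) i * Sum.elim (Pp' x) (Pm' x) i)
            * W x t i ^ 2
        + 2 * (Sum.elim (Λp x) (fun j => -Λm x j) i * Sum.elim (Pp x) (Pm x) i)
            * W x t i * Wx x t i))
      ≤ -η * ∑ i, Sum.elim (Pp x) (Pm x) i * W x t i ^ 2 := by
    intro x hx t htT
    have ht : t ∈ Set.Ici (0:ℝ) := htT.1
    have hMat : Matrix.fromBlocks (Matrix.diagonal (Λp x)) 0 0 (-(Matrix.diagonal (Λm x)))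
        = Matrix.diagonal (Sum.elim (Λp x) (fun j => -Λm x j)) := by
      rw [Matrix.diagonal_neg, Matrix.fromBlocks_diagonal]
    have hMat' : Matrix.fromBlocks (Matrix.diagonal (Λp' x)) 0 0 (-(Matrix.diagonal (Λm' x)))
        = Matrix.diagonal (Sum.elim (Λp' x) (fun j => -Λm' x j)) := by
      rw [Matrix.diagonal_neg, Matrix.fromBlocks_diagonal]
    have hPDEi : ∀ i, Wt x t i = -(Sum.elim (Λp x) (fun j => -Λm x j) i * Wx x t i)
        - (Pim x *ᵥ W x t) i := by
      intro i
      have h0 := congrFun (hPDE x hx t ht) i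
      rw [hMat] at h0
      simp only [Pi.add_apply, Matrix.mulVec_diagonal, Pi.zero_apply] at h0
      linarith
    have hd := hdiss x hx (W x t)
    simp only [blkdiag_eq] at hd
    rw [hMat, hMat'] at hd
    simp only [Matrix.diagonal_mul_diagonal, Matrix.sub_mulVec, Matrix.add_mulVec,
      Matrix.neg_mulVec, dotProduct_add, dotProduct_sub,
      dotProduct_neg] at hd
    rw [dot_diag_mulVec, dot_diag_mulVec, dot_diag_mulVec, quad_transpose_diag,
      quad_diag_mul] at hd
    try simp only [Pi.mul_apply] at hd
    have ha : ∑ i, 2 * Sum.elim (Pp x) (Pm x) i * W x t i * Wt x t i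
        = -(2 * ∑ i, Sum.elim (Λp x) (fun j => -Λm x j) i * Sum.elim (Pp x) (Pm x) i
              * W x t i * Wx x t i)
          - 2 * ∑ i, Sum.elim (Pp x) (Pm x) i * W x t i * (Pim x *ᵥ W x t) i := by
      calc ∑ i, 2 * Sum.elim (Pp x) (Pm x) i * W x t i * Wt x t i
          = ∑ i, (-(2 * (Sum.elim (Λp x) (fun j => -Λm x j) i * Sum.elim (Pp x) (Pm x) i
                * W x t i * Wx x t i))
              - 2 * (Sum.elim (Pp x) (Pm x) i * W x t i * (Pim x *ᵥ W x t) i)) :=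
            Finset.sum_congr rfl fun i _ => by rw [hPDEi i]; ring
        _ = (∑ i, -(2 * (Sum.elim (Λp x) (fun j => -Λm x j) i * Sum.elim (Pp x) (Pm x) i
                * W x t i * Wx x t i)))
            - ∑ i, 2 * (Sum.elim (Pp x) (Pm x) i * W x t i * (Pim x *ᵥ W x t) i) :=
            Finset.sum_sub_distrib _ _
        _ = -(2 * ∑ i, Sum.elim (Λp x) (fun j => -Λm x j) i * Sum.elim (Pp x) (Pm x) i
                * W x t i * Wx x t i)
            - 2 * ∑ i, Sum.elim (Pp x) (Pm x) i * W x t i * (Pim x *ᵥ W x t) i := by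
            rw [Finset.sum_neg_distrib, ← Finset.mul_sum, ← Finset.mul_sum]
    have hb : ∑ i, ((Sum.elim (Λp' x) (fun j => -Λm' x j) i * Sum.elim (Pp x) (Pm x) i
          + Sum.elim (Λp x) (fun j => -Λm x j) i * Sum.elim (Pp' x) (Pm' x) i)
            * W x t i ^ 2
        + 2 * (Sum.elim (Λp x) (fun j => -Λm x j) i * Sum.elim (Pp x) (Pm x) i)
            * W x t i * Wx x t i)
        = (∑ i, (Sum.elim (Λp' x) (fun j => -Λm' x j) i * Sum.elim (Pp x) (Pm x) i
              + Sum.elim (Λp x) (fun j => -Λm x j) i * Sum.elim (Pp' x) (Pm' x) i)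
                * W x t i ^ 2)
          + 2 * ∑ i, Sum.elim (Λp x) (fun j => -Λm x j) i * Sum.elim (Pp x) (Pm x) i
              * W x t i * Wx x t i := by
      rw [Finset.sum_add_distrib]
      congr 1
      rw [Finset.mul_sum]
      exact Finset.sum_congr rfl fun i _ => by ring
    have hc : (∑ i, Sum.elim (Λp x) (fun j => -Λm x j) i * Sum.elim (Pp' x) (Pm' x) i
          * W x t i * W x t i)
        + (∑ i, Sum.elim (Λp' x) (fun j => -Λm' x j) i * Sum.elim (Pp x) (Pm x) i
          * W x t i * W x t i)
        = ∑ i, (Sum.elim (Λp' x) (fun j => -Λm' x j) i * Sum.elim (Pp x) (Pm x) i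
              + Sum.elim (Λp x) (fun j => -Λm x j) i * Sum.elim (Pp' x) (Pm' x) i)
                * W x t i ^ 2 := by
      rw [← Finset.sum_add_distrib]
      exact Finset.sum_congr rfl fun i _ => by ring
    have hc2 : ∑ i, Sum.elim (Pp x) (Pm x) i * (Pim x *ᵥ W x t) i * W x t i
        = ∑ i, Sum.elim (Pp x) (Pm x) i * W x t i * (Pim x *ᵥ W x t) i :=
      Finset.sum_congr rfl fun i _ => by ring
    have hc3 : ∑ i, Sum.elim (Pp x) (Pm x) i * W x t i * W x t i
        = ∑ i, Sum.elim (Pp x) (Pm x) i * W x t i ^ 2 :=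
      Finset.sum_congr rfl fun i _ => by ring
    rw [hc3, hc2] at hd
    rw [ha, hb]
    linarith [hd, hc]
  -- boundary inequality
  have hbnd : ∀ t ∈ Set.Icc (0:ℝ) T,
      (∑ i, Sum.elim (Λp 0) (fun j => -Λm 0 j) i * Sum.elim (Pp 0) (Pm 0) i
          * W 0 t i ^ 2)
      - (∑ i, Sum.elim (Λp l) (fun j => -Λm l j) i * Sum.elim (Pp l) (Pm l) i
          * W l t i ^ 2) ≤ ν * (1 + 1/ξ) * Sb := by
    intro t htT
    have ht : t ∈ Set.Ici (0:ℝ) := htT.1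
    have hbc := hBC t ht
    have hbci : ∀ i, Sum.elim (fun i => W 0 t (Sum.inl i)) (fun i => W l t (Sum.inr i)) i
        = (K *ᵥ Sum.elim (fun i => W l t (Sum.inl i)) (fun i => W 0 t (Sum.inr i))) i
          + (M *ᵥ b t) i := by
      intro i
      have h0 := congrFun hbc i
      simpa using h0
    have hdin0 : ∀ i, 0 ≤ Sum.elim (fun i => Λp 0 i * Pp 0 i)
        (fun i => Λm l i * Pm l i) i := by
      intro i
      cases i with
      | inl j =>
        exact mul_nonneg (hΛppos 0 h0l j).le (le_trans hζ.le (hPpbound 0 h0l j).1)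
      | inr j =>
        exact mul_nonneg (hΛmpos l hll j).le (le_trans hζ.le (hPmbound l hll j).1)
    have hid : (∑ i, Sum.elim (Λp 0) (fun j => -Λm 0 j) i * Sum.elim (Pp 0) (Pm 0) i
          * W 0 t i ^ 2)
        - (∑ i, Sum.elim (Λp l) (fun j => -Λm l j) i * Sum.elim (Pp l) (Pm l) i
          * W l t i ^ 2)
        = (∑ i, Sum.elim (fun i => Λp 0 i * Pp 0 i) (fun i => Λm l i * Pm l i) i
              * (Sum.elim (fun i => W 0 t (Sum.inl i)) (fun i => W l t (Sum.inr i)) i) ^ 2)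
          - ∑ i, Sum.elim (fun i => Λp l i * Pp l i) (fun i => Λm 0 i * Pm 0 i) i
              * (Sum.elim (fun i => W l t (Sum.inl i)) (fun i => W 0 t (Sum.inr i)) i) ^ 2 := by
      simp only [Fintype.sum_sum_type, Sum.elim_inl, Sum.elim_inr, neg_mul,
        Finset.sum_neg_distrib]
      ring
    have hyoung : (∑ i, Sum.elim (fun i => Λp 0 i * Pp 0 i) (fun i => Λm l i * Pm l i) i
          * (Sum.elim (fun i => W 0 t (Sum.inl i)) (fun i => W l t (Sum.inr i)) i) ^ 2)
        ≤ (1+ξ) * (∑ i, Sum.elim (fun i => Λp 0 i * Pp 0 i) (fun i => Λm l i * Pm l i) i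
            * ((K *ᵥ Sum.elim (fun i => W l t (Sum.inl i)) (fun i => W 0 t (Sum.inr i))) i) ^ 2)
          + (1+1/ξ) * (∑ i, Sum.elim (fun i => Λp 0 i * Pp 0 i) (fun i => Λm l i * Pm l i) i
            * ((M *ᵥ b t) i) ^ 2) := by
      calc (∑ i, Sum.elim (fun i => Λp 0 i * Pp 0 i) (fun i => Λm l i * Pm l i) i
          * (Sum.elim (fun i => W 0 t (Sum.inl i)) (fun i => W l t (Sum.inr i)) i) ^ 2)
          = ∑ i, Sum.elim (fun i => Λp 0 i * Pp 0 i) (fun i => Λm l i * Pm l i) i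
              * ((K *ᵥ Sum.elim (fun i => W l t (Sum.inl i)) (fun i => W 0 t (Sum.inr i))) i
                + (M *ᵥ b t) i) ^ 2 :=
            Finset.sum_congr rfl fun i _ => by rw [hbci i]
        _ ≤ ∑ i, Sum.elim (fun i => Λp 0 i * Pp 0 i) (fun i => Λm l i * Pm l i) i
              * ((1+ξ) * ((K *ᵥ Sum.elim (fun i => W l t (Sum.inl i))
                    (fun i => W 0 t (Sum.inr i))) i) ^ 2
                + (1+1/ξ) * ((M *ᵥ b t) i) ^ 2) :=
            Finset.sum_le_sum fun i _ =>
              mul_le_mul_of_nonneg_left (young_sq hξ _ _) (hdin0 i)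
        _ = ∑ i, ((1+ξ) * (Sum.elim (fun i => Λp 0 i * Pp 0 i) (fun i => Λm l i * Pm l i) i
              * ((K *ᵥ Sum.elim (fun i => W l t (Sum.inl i))
                    (fun i => W 0 t (Sum.inr i))) i) ^ 2)
            + (1+1/ξ) * (Sum.elim (fun i => Λp 0 i * Pp 0 i) (fun i => Λm l i * Pm l i) i
              * ((M *ᵥ b t) i) ^ 2)) :=
            Finset.sum_congr rfl fun i _ => by ring
        _ = _ := by rw [Finset.sum_add_distrib, ← Finset.mul_sum, ← Finset.mul_sum]
    have hb2 : (1+ξ) * (∑ i, Sum.elim (fun i => Λp 0 i * Pp 0 i) (fun i => Λm l i * Pm l i) i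
          * ((K *ᵥ Sum.elim (fun i => W l t (Sum.inl i)) (fun i => W 0 t (Sum.inr i))) i) ^ 2)
        ≤ ∑ i, Sum.elim (fun i => Λp l i * Pp l i) (fun i => Λm 0 i * Pm 0 i) i
            * (Sum.elim (fun i => W l t (Sum.inl i)) (fun i => W 0 t (Sum.inr i)) i) ^ 2 := by
      have h0 := hbdry (Sum.elim (fun i => W l t (Sum.inl i)) (fun i => W 0 t (Sum.inr i)))
      simp only [blkdiag_eq] at h0
      rw [Matrix.sub_mulVec, dotProduct_sub, Matrix.smul_mulVec,
        dotProduct_smul, dot_diag_mulVec, quad_KDK, smul_eq_mul] at h0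
      have heq : ∑ i, Sum.elim (fun i => Λp l i * Pp l i) (fun i => Λm 0 i * Pm 0 i) i
            * Sum.elim (fun i => W l t (Sum.inl i)) (fun i => W 0 t (Sum.inr i)) i
            * Sum.elim (fun i => W l t (Sum.inl i)) (fun i => W 0 t (Sum.inr i)) i
          = ∑ i, Sum.elim (fun i => Λp l i * Pp l i) (fun i => Λm 0 i * Pm 0 i) i
            * (Sum.elim (fun i => W l t (Sum.inl i)) (fun i => W 0 t (Sum.inr i)) i) ^ 2 :=
        Finset.sum_congr rfl fun i _ => by ring
      rw [heq] at h0
      linarith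
    have hb3 : (∑ i, Sum.elim (fun i => Λp 0 i * Pp 0 i) (fun i => Λm l i * Pm l i) i
          * ((M *ᵥ b t) i) ^ 2) ≤ ν * ∑ i, b t i ^ 2 := by
      have h0 := hnu (b t)
      simp only [blkdiag_eq] at h0
      rw [quad_KDK] at h0
      exact h0
    have hSbt : (∑ i, b t i ^ 2) ≤ Sb := hSle t ⟨ht, htT.2⟩
    have hpos : (0:ℝ) ≤ 1 + 1/ξ := by positivity
    have h4 : (1+1/ξ) * (∑ i, Sum.elim (fun i => Λp 0 i * Pp 0 i)
          (fun i => Λm l i * Pm l i) i * ((M *ᵥ b t) i) ^ 2)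
        ≤ (1+1/ξ) * (ν * ∑ i, b t i ^ 2) := mul_le_mul_of_nonneg_left hb3 hpos
    have h5 : ν * (1+1/ξ) * (∑ i, b t i ^ 2) ≤ ν * (1+1/ξ) * Sb :=
      mul_le_mul_of_nonneg_left hSbt (mul_nonneg hν.le hpos)
    rw [hid]
    linarith [hyoung, hb2, h4, h5]
  have key := energy_decay l T η (ν * (1 + 1/ξ) * Sb) hl.le hT hη (by positivity)
    (fun x t => ∑ i, Sum.elim (Pp x) (Pm x) i * W x t i ^ 2)
    (fun x t => ∑ i, 2 * Sum.elim (Pp x) (Pm x) i * W x t i * Wt x t i)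
    (fun x t => ∑ i, Sum.elim (Λp x) (fun j => -Λm x j) i * Sum.elim (Pp x) (Pm x) i
        * W x t i ^ 2)
    (fun x t => ∑ i, ((Sum.elim (Λp' x) (fun j => -Λm' x j) i * Sum.elim (Pp x) (Pm x) i
          + Sum.elim (Λp x) (fun j => -Λm x j) i * Sum.elim (Pp' x) (Pm' x) i)
            * W x t i ^ 2
        + 2 * (Sum.elim (Λp x) (fun j => -Λm x j) i * Sum.elim (Pp x) (Pm x) i)
            * W x t i * Wx x t i))
    heeC hetC hffxC heet hffd hpt hbnd
  -- final assembly
  have hWslsum : ∀ t ∈ Set.Ici (0:ℝ), ContinuousOn (fun x => ∑ i, W x t i ^ 2)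
      (Set.Icc 0 l) :=
    fun t ht => continuousOn_finset_sum _ fun i _ => (hWsl t ht i).pow 2
  have heesl : ∀ t ∈ Set.Ici (0:ℝ), ContinuousOn
      (fun x => ∑ i, Sum.elim (Pp x) (Pm x) i * W x t i ^ 2) (Set.Icc 0 l) :=
    fun t ht => continuousOn_finset_sum _ fun i _ => (hqC i).mul ((hWsl t ht i).pow 2)
  have hIW : ∀ t ∈ Set.Ici (0:ℝ), IntervalIntegrable (fun x => ∑ i, W x t i ^ 2)
      volume 0 l := fun t ht => (hWslsum t ht).intervalIntegrable_of_Icc hl.le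
  have hIee : ∀ t ∈ Set.Ici (0:ℝ), IntervalIntegrable
      (fun x => ∑ i, Sum.elim (Pp x) (Pm x) i * W x t i ^ 2) volume 0 l :=
    fun t ht => (heesl t ht).intervalIntegrable_of_Icc hl.le
  have hlow : ζ * (∫ x in (0:ℝ)..l, ∑ i, W x T i ^ 2)
      ≤ ∫ x in (0:ℝ)..l, ∑ i, Sum.elim (Pp x) (Pm x) i * W x T i ^ 2 := by
    rw [← intervalIntegral.integral_const_mul]
    apply intervalIntegral.integral_mono_on hl.le ((hIW T hT).const_mul ζ) (hIee T hT)
    intro x hx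
    rw [Finset.mul_sum]
    exact Finset.sum_le_sum fun i _ =>
      mul_le_mul_of_nonneg_right (hqlb x hx i) (sq_nonneg _)
  have hup : (∫ x in (0:ℝ)..l, ∑ i, Sum.elim (Pp x) (Pm x) i * W x 0 i ^ 2)
      ≤ β * ∫ x in (0:ℝ)..l, ∑ i, W x 0 i ^ 2 := by
    rw [← intervalIntegral.integral_const_mul]
    apply intervalIntegral.integral_mono_on hl.le (hIee 0 Set.self_mem_Ici)
      ((hIW 0 Set.self_mem_Ici).const_mul β)
    intro x hx
    rw [Finset.mul_sum]
    exact Finset.sum_le_sum fun i _ =>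
      mul_le_mul_of_nonneg_right (hqub x hx i) (sq_nonneg _)
  have hE : (0:ℝ) < Real.exp (-η * T) := Real.exp_pos _
  have hkey2 : ζ * (∫ x in (0:ℝ)..l, ∑ i, W x T i ^ 2)
      ≤ β * (∫ x in (0:ℝ)..l, ∑ i, W x 0 i ^ 2) * Real.exp (-η * T)
        + (ν * (1 + 1/ξ) * Sb) / η := by
    have h1 := mul_le_mul_of_nonneg_right hup hE.le
    calc ζ * (∫ x in (0:ℝ)..l, ∑ i, W x T i ^ 2)
        ≤ ∫ x in (0:ℝ)..l, ∑ i, Sum.elim (Pp x) (Pm x) i * W x T i ^ 2 := hlow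
      _ ≤ (∫ x in (0:ℝ)..l, ∑ i, Sum.elim (Pp x) (Pm x) i * W x 0 i ^ 2)
            * Real.exp (-η * T) + (ν * (1 + 1/ξ) * Sb) / η := key
      _ ≤ β * (∫ x in (0:ℝ)..l, ∑ i, W x 0 i ^ 2) * Real.exp (-η * T)
            + (ν * (1 + 1/ξ) * Sb) / η := by linarith
  have hR : (β / ζ) * Real.exp (-η * T) * (∫ x in (0:ℝ)..l, ∑ i, W x 0 i ^ 2)
      + (ν / (ζ * η)) * (1 + 1/ξ) * Sb
      = (β * (∫ x in (0:ℝ)..l, ∑ i, W x 0 i ^ 2) * Real.exp (-η * T)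
        + (ν * (1 + 1/ξ) * Sb) / η) / ζ := by
    field_simp
  rw [hR, le_div_iff₀ hζ]
  linarith
end

section
/- Let l > 0 and 0 < m < k. Let Λ = diag(Λ⁺, −Λ⁻) be a constant diagonal matrix with Λ⁺ ∈ ℝ^{m×m}, Λ⁻ ∈ ℝ^{(k−m)×(k−m)} diagonal with strictly positive diagonal entries, let Π ∈ ℝ^{k×k} be a constant matrix, let P(x) = diag(P⁺(x), P⁻(x)) be a continuously differentiable diagonal-matrix-valued weight whose diagonal entries all lie in [ζ, β] with 0 < ζ ≤ β, let K, M ∈ ℝ^{k×k} with M diagonal, let b : [0,∞) → ℝ^k be continuous, and let ξ > 0. Let W : [0,l] × [0,∞) → ℝ^k, written W = (W⁺, W⁻), be a continuously differentiable solution of ∂ₜW + Λ·∂ₓW + Π·W = 0 satisfying (W⁺(0,t), W⁻(l,t)) = K·(W⁺(l,t), W⁻(0,t)) + M·b(t) for all t ≥ 0. Assume: (i) there is η > 0 such that for all x ∈ [0,l] and v ∈ ℝ^k, vᵀ( −Λ·P′(x) + ΠᵀP(x) + P(x)Π )v ≥ η·vᵀP(x)v; (ii) diag(Λ⁺P⁺(l),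 Λ⁻P⁻(0)) − (1 + ξ)·Kᵀ·diag(Λ⁺P⁺(0), Λ⁻P⁻(l))·K is positive semi-definite; (iii) ν > 0 satisfies cᵀMᵀ·diag(Λ⁺P⁺(0), Λ⁻P⁻(l))·Mc ≤ ν·|c|² for all c ∈ ℝ^k. Then for all t ≥ 0, ∫₀ˡ |W(x,t)|² dx ≤ (β/ζ)·e^{−η t}·∫₀ˡ |W(x,0)|² dx + (ν/(ζ·η))·(1 + 1/ξ)·sup_{s∈[0,t]} |b(s)|². -/
set_option maxHeartbeats 1000000

open Matrix MeasureTheory intervalIntegral Set Filter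

lemma quad_diag {n : Type*} [Fintype n] [DecidableEq n] (d v : n → ℝ) :
    v ⬝ᵥ (Matrix.diagonal d *ᵥ v) = ∑ i, d i * v i ^ 2 := by
  simp only [dotProduct, Matrix.mulVec_diagonal]
  exact Finset.sum_congr rfl fun i _ => by ring

lemma quad_conj {n : Type*} [Fintype n] [DecidableEq n] (A : Matrix n n ℝ) (d v : n → ℝ) :
    v ⬝ᵥ ((Aᵀ * Matrix.diagonal d * A) *ᵥ v) = ∑ i, d i * ((A *ᵥ v) i) ^ 2 := by
  rw [← Matrix.mulVec_mulVec, ← Matrix.mulVec_mulVec, Matrix.dotProduct_mulVec,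
    Matrix.vecMul_transpose, quad_diag]

lemma quad_right {n : Type*} [Fintype n] [DecidableEq n] (A : Matrix n n ℝ) (d v : n → ℝ) :
    v ⬝ᵥ ((Aᵀ * Matrix.diagonal d) *ᵥ v) = ∑ i, (A *ᵥ v) i * (d i * v i) := by
  rw [← Matrix.mulVec_mulVec, Matrix.dotProduct_mulVec, Matrix.vecMul_transpose]
  simp only [dotProduct, Matrix.mulVec_diagonal]

lemma quad_left {n : Type*} [Fintype n] [DecidableEq n] (A : Matrix n n ℝ) (d v : n → ℝ) :
    v ⬝ᵥ ((Matrix.diagonal d * A) *ᵥ v) = ∑ i, v i * (d i * (A *ᵥ v) i) := by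
  rw [← Matrix.mulVec_mulVec]
  simp only [dotProduct, Matrix.mulVec_diagonal]

lemma gronwall_aux {V g : ℝ → ℝ} {η C T : ℝ} (hη : 0 < η) (hC : 0 ≤ C) (hT : 0 ≤ T)
    (hVc : ContinuousOn V (Set.Icc 0 T))
    (hVd : ∀ t ∈ Set.Ico 0 T, HasDerivWithinAt V (g t) (Set.Icc 0 T) t)
    (hb : ∀ t ∈ Set.Ico 0 T, g t ≤ -η * V t + C) :
    V T ≤ V 0 * Real.exp (-η * T) + C / η := by
  have h := le_gronwallBound_of_liminf_deriv_right_le (f := V) (f' := g) (δ := V 0)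
    (K := -η) (ε := C) (a := 0) (b := T) hVc ?_ le_rfl hb T (by constructor <;> linarith)
  · rw [gronwallBound_of_K_ne_0 (by linarith)] at h
    have h2 : Real.exp (-η * (T - 0)) ≤ 1 := by
      apply Real.exp_le_one_iff.mpr; nlinarith
    have h3 : C / -η * (Real.exp (-η * (T - 0)) - 1) ≤ C / η := by
      rw [div_neg, neg_mul]
      have : 0 ≤ C / η := div_nonneg hC hη.le
      nlinarith [Real.exp_pos (-η * (T - 0))]
    simp only [sub_zero] at h h2 h3
    linarith
  · intro x hx r hr
    have hd := (hVd x hx)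
    rw [hasDerivWithinAt_iff_tendsto_slope] at hd
    have hmono : nhdsWithin x (Set.Ioi x) ≤ nhdsWithin x (Set.Icc 0 T \ {x}) := by
      rw [← nhdsWithin_Ioo_eq_nhdsGT hx.2]
      apply nhdsWithin_mono
      intro z hz
      exact ⟨⟨le_trans hx.1 (le_of_lt hz.1), hz.2.le⟩, by
        simp only [Set.mem_singleton_iff]; exact ne_of_gt hz.1⟩
    have h2 : ∀ᶠ z in nhdsWithin x (Set.Ioi x), slope V x z < r :=
      (hd.mono_left hmono).eventually_lt_const hr
    exact h2.frequently.mono fun z hz => by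
      simpa [slope_def_field, div_eq_inv_mul] using hz

lemma boundary_aux {n : Type*} [Fintype n] [DecidableEq n]
    (K M : Matrix n n ℝ) (ain aout u c : n → ℝ) {ξ ν : ℝ} (hξ : 0 < ξ)
    (hain : ∀ i, 0 ≤ ain i)
    (hb2 : 0 ≤ u ⬝ᵥ ((Matrix.diagonal aout - (1 + ξ) • (Kᵀ * Matrix.diagonal ain * K)) *ᵥ u))
    (hnu : c ⬝ᵥ ((Mᵀ * Matrix.diagonal ain * M) *ᵥ c) ≤ ν * ∑ i, c i ^ 2) :
    (∑ i, ain i * (K *ᵥ u + M *ᵥ c) i ^ 2) - ∑ i, aout i * u i ^ 2 ≤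
      ν * (1 + 1 / ξ) * ∑ i, c i ^ 2 := by
  rw [Matrix.sub_mulVec, dotProduct_sub, Matrix.smul_mulVec,
    dotProduct_smul, quad_diag, quad_conj, smul_eq_mul] at hb2
  rw [quad_conj] at hnu
  have hyoung : ∀ i, ain i * (K *ᵥ u + M *ᵥ c) i ^ 2 ≤
      (1 + ξ) * (ain i * ((K *ᵥ u) i) ^ 2) + (1 + 1 / ξ) * (ain i * ((M *ᵥ c) i) ^ 2) := by
    intro i
    have hi := hain i
    have h1 : ξ * (1 / ξ) = 1 := mul_one_div_cancel (ne_of_gt hξ)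
    have hsq := mul_nonneg hi (sq_nonneg (ξ * (K *ᵥ u) i - (M *ᵥ c) i))
    simp only [Pi.add_apply]
    have key : (1 + ξ) * (ain i * ((K *ᵥ u) i) ^ 2) + (1 + 1 / ξ) * (ain i * ((M *ᵥ c) i) ^ 2)
        - ain i * ((K *ᵥ u) i + (M *ᵥ c) i) ^ 2
        = (1 / ξ) * (ain i * (ξ * (K *ᵥ u) i - (M *ᵥ c) i) ^ 2) := by
      field_simp
      ring
    have hpos : (0:ℝ) ≤ (1 / ξ) * (ain i * (ξ * (K *ᵥ u) i - (M *ᵥ c) i) ^ 2) :=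
      mul_nonneg (by positivity) hsq
    linarith
  have hsum := Finset.sum_le_sum (fun i (_ : i ∈ Finset.univ) => hyoung i)
  rw [Finset.sum_add_distrib, ← Finset.mul_sum, ← Finset.mul_sum] at hsum
  have h3 : (1 + 1 / ξ) * ∑ i, ain i * ((M *ᵥ c) i) ^ 2 ≤ (1 + 1 / ξ) * (ν * ∑ i, c i ^ 2) := by
    apply mul_le_mul_of_nonneg_left hnu
    positivity
  have hfin : ν * (1 + 1 / ξ) * ∑ i, c i ^ 2 = (1 + 1 / ξ) * (ν * ∑ i, c i ^ 2) := by ring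
  rw [hfin]
  linarith
theorem iss_in_L2_norm_uniform (m km : ℕ) (hm : 0 < m) (hkm : 0 < km)
    (l : ℝ) (hl : 0 < l)
    (Λp : Fin m → ℝ) (Λm : Fin km → ℝ)
    (Pp Pp' : ℝ → Fin m → ℝ) (Pm Pm' : ℝ → Fin km → ℝ)
    (Pim : Matrix (Fin m ⊕ Fin km) (Fin m ⊕ Fin km) ℝ)
    (K M : Matrix (Fin m ⊕ Fin km) (Fin m ⊕ Fin km) ℝ) (hM : M.IsDiag)
    (b : ℝ → Fin m ⊕ Fin km → ℝ)
    (ξ η ν ζ β : ℝ) (hξ : 0 < ξ) (hη : 0 < η) (hν : 0 < ν)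
    (hζ : 0 < ζ) (hζβ : ζ ≤ β)
    (hΛppos : ∀ i, 0 < Λp i) (hΛmpos : ∀ i, 0 < Λm i)
    (hPpderiv : ∀ x ∈ Set.Icc (0 : ℝ) l, ∀ i,
      HasDerivWithinAt (fun y => Pp y i) (Pp' x i) (Set.Icc 0 l) x)
    (hPmderiv : ∀ x ∈ Set.Icc (0 : ℝ) l, ∀ i,
      HasDerivWithinAt (fun y => Pm y i) (Pm' x i) (Set.Icc 0 l) x)
    (hPp'cont : ∀ i, ContinuousOn (fun x => Pp' x i) (Set.Icc 0 l))
    (hPm'cont : ∀ i, ContinuousOn (fun x => Pm' x i) (Set.Icc 0 l))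
    (hPpbound : ∀ x ∈ Set.Icc (0 : ℝ) l, ∀ i, Pp x i ∈ Set.Icc ζ β)
    (hPmbound : ∀ x ∈ Set.Icc (0 : ℝ) l, ∀ i, Pm x i ∈ Set.Icc ζ β)
    (hbcont : ∀ i, ContinuousOn (fun t => b t i) (Set.Ici 0))
    -- the C¹ solution of the balance law
    (W Wt Wx : ℝ → ℝ → Fin m ⊕ Fin km → ℝ)
    (hWt : ∀ x ∈ Set.Icc (0 : ℝ) l, ∀ t ∈ Set.Ici (0 : ℝ), ∀ i,
      HasDerivWithinAt (fun τ => W x τ i) (Wt x t i) (Set.Ici 0) t)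
    (hWx : ∀ x ∈ Set.Icc (0 : ℝ) l, ∀ t ∈ Set.Ici (0 : ℝ), ∀ i,
      HasDerivWithinAt (fun y => W y t i) (Wx x t i) (Set.Icc 0 l) x)
    (hWcont : ∀ i, ContinuousOn (fun p : ℝ × ℝ => W p.1 p.2 i)
      (Set.Icc 0 l ×ˢ Set.Ici 0))
    (hWtcont : ∀ i, ContinuousOn (fun p : ℝ × ℝ => Wt p.1 p.2 i)
      (Set.Icc 0 l ×ˢ Set.Ici 0))
    (hWxcont : ∀ i, ContinuousOn (fun p : ℝ × ℝ => Wx p.1 p.2 i)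
      (Set.Icc 0 l ×ˢ Set.Ici 0))
    (hPDE : ∀ x ∈ Set.Icc (0 : ℝ) l, ∀ t ∈ Set.Ici (0 : ℝ),
      Wt x t + (Matrix.fromBlocks (Matrix.diagonal Λp) 0 0
        (-(Matrix.diagonal Λm))) *ᵥ Wx x t + Pim *ᵥ W x t = 0)
    -- boundary conditions with disturbance
    (hBC : ∀ t ∈ Set.Ici (0 : ℝ),
      Sum.elim (fun i => W 0 t (Sum.inl i)) (fun i => W l t (Sum.inr i)) =
        K *ᵥ Sum.elim (fun i => W l t (Sum.inl i)) (fun i => W 0 t (Sum.inr i))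
          + M *ᵥ b t)
    -- (i) interior dissipativity
    (hdiss : ∀ x ∈ Set.Icc (0 : ℝ) l, ∀ v : Fin m ⊕ Fin km → ℝ,
      η * (v ⬝ᵥ (blkdiag (Pp x) (Pm x) *ᵥ v)) ≤
        v ⬝ᵥ ((-( (Matrix.fromBlocks (Matrix.diagonal Λp) 0 0
                  (-(Matrix.diagonal Λm))) * blkdiag (Pp' x) (Pm' x))
            + Pimᵀ * blkdiag (Pp x) (Pm x)
            + blkdiag (Pp x) (Pm x) * Pim) *ᵥ v))
    -- (ii) boundary matrix positive semi-definite
    (hbdry : ∀ v : Fin m ⊕ Fin km → ℝ,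
      0 ≤ v ⬝ᵥ ((blkdiag (fun i => Λp i * Pp l i) (fun i => Λm i * Pm 0 i)
          - (1 + ξ) • (Kᵀ *
              blkdiag (fun i => Λp i * Pp 0 i) (fun i => Λm i * Pm l i) * K)) *ᵥ v))
    -- (iii) bound on the disturbance matrix
    (hnu : ∀ c : Fin m ⊕ Fin km → ℝ,
      c ⬝ᵥ ((Mᵀ * blkdiag (fun i => Λp i * Pp 0 i) (fun i => Λm i * Pm l i) * M)
        *ᵥ c) ≤ ν * ∑ i, (c i) ^ 2) :
    ∀ t ∈ Set.Ici (0 : ℝ),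
      (∫ x in (0 : ℝ)..l, ∑ i, (W x t i) ^ 2) ≤
        (β / ζ) * Real.exp (-η * t) * (∫ x in (0 : ℝ)..l, ∑ i, (W x 0 i) ^ 2)
          + (ν / (ζ * η)) * (1 + 1 / ξ) *
              ⨆ s : Set.Icc (0 : ℝ) t, ∑ i, (b (↑s) i) ^ 2 := by
  classical
  intro T hT
  rw [Set.mem_Ici] at hT
  set q : ℝ → Fin m ⊕ Fin km → ℝ := fun x => Sum.elim (Pp' x) (Pm' x) with hq_def
  set p : ℝ → Fin m ⊕ Fin km → ℝ := fun x => Sum.elim (Pp x) (Pm x) with hp_def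
  set lam : Fin m ⊕ Fin km → ℝ := Sum.elim Λp (fun i => -Λm i) with hlam_def
  have hblk : ∀ (a : Fin m → ℝ) (c : Fin km → ℝ),
      blkdiag a c = Matrix.diagonal (Sum.elim a c) := by
    intro a c
    unfold blkdiag
    exact Matrix.fromBlocks_diagonal a c
  have hΛmat : (Matrix.fromBlocks (Matrix.diagonal Λp) 0 0
      (-(Matrix.diagonal Λm))) = Matrix.diagonal lam := by
    rw [Matrix.diagonal_neg, Matrix.fromBlocks_diagonal]
  have hpd : ∀ x ∈ Set.Icc (0 : ℝ) l, ∀ i,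
      HasDerivWithinAt (fun y => p y i) (q x i) (Set.Icc 0 l) x := by
    intro x hx i
    cases i with
    | inl j => exact hPpderiv x hx j
    | inr j => exact hPmderiv x hx j
  have hpcont : ∀ i, ContinuousOn (fun x => p x i) (Set.Icc 0 l) :=
    fun i x hx => ((hpd x hx i).continuousWithinAt)
  have hqcont : ∀ i, ContinuousOn (fun x => q x i) (Set.Icc 0 l) := by
    intro i
    cases i with
    | inl j => exact hPp'cont j
    | inr j => exact hPm'cont j
  have hpbound : ∀ x ∈ Set.Icc (0 : ℝ) l, ∀ i, p x i ∈ Set.Icc ζ β := by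
    intro x hx i
    cases i with
    | inl j => exact hPpbound x hx j
    | inr j => exact hPmbound x hx j
  set F : ℝ → ℝ → ℝ := fun x t => ∑ i, p x i * W x t i ^ 2 with hF_def
  set Ft : ℝ → ℝ → ℝ := fun x t => ∑ i, p x i * (2 * W x t i * Wt x t i) with hFt_def
  set G : ℝ → ℝ → ℝ := fun x t => ∑ i, lam i * (p x i * W x t i ^ 2) with hG_def
  set Gx : ℝ → ℝ → ℝ := fun x t =>
    ∑ i, lam i * (q x i * W x t i ^ 2 + p x i * (2 * W x t i * Wx x t i)) with hGx_def
  set V : ℝ → ℝ := fun t => ∫ x in (0 : ℝ)..l, F x t with hV_def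
  set g : ℝ → ℝ := fun t => ∫ x in (0 : ℝ)..l, Ft x t with hg_def
  set S : ℝ := ⨆ s : Set.Icc (0 : ℝ) T, ∑ i, (b (↑s) i) ^ 2 with hS_def
  -- continuity on the space-time rectangle
  have hxcurve : ∀ t : ℝ, ContinuousOn (fun x : ℝ => ((x, t) : ℝ × ℝ)) (Set.Icc 0 l) :=
    fun t => (continuous_id.prodMk continuous_const).continuousOn
  have htcurve : ∀ x : ℝ, ContinuousOn (fun τ : ℝ => ((x, τ) : ℝ × ℝ)) (Set.Ici 0) :=
    fun x => (continuous_const.prodMk continuous_id).continuousOn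
  have hmapsx : ∀ t ∈ Set.Ici (0 : ℝ), Set.MapsTo (fun x : ℝ => ((x, t) : ℝ × ℝ))
      (Set.Icc 0 l) (Set.Icc 0 l ×ˢ Set.Ici 0) := fun t ht x hx => ⟨hx, ht⟩
  have hmapst : ∀ x ∈ Set.Icc (0 : ℝ) l, Set.MapsTo (fun τ : ℝ => ((x, τ) : ℝ × ℝ))
      (Set.Ici 0) (Set.Icc 0 l ×ˢ Set.Ici 0) := fun x hx τ hτ => ⟨hx, hτ⟩
  have hFtc : ContinuousOn (fun r : ℝ × ℝ => Ft r.1 r.2) (Set.Icc 0 l ×ˢ Set.Ici 0) := by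
    simp only [hFt_def]
    apply continuousOn_finset_sum
    intro i _
    exact ((hpcont i).comp continuous_fst.continuousOn fun r hr => hr.1).mul
      ((continuousOn_const.mul (hWcont i)).mul (hWtcont i))
  -- slices
  have hWslicex : ∀ t ∈ Set.Ici (0 : ℝ), ∀ i, ContinuousOn (fun x => W x t i)
      (Set.Icc 0 l) := fun t ht i => (hWcont i).comp (hxcurve t) (hmapsx t ht)
  have hWtslicex : ∀ t ∈ Set.Ici (0 : ℝ), ∀ i, ContinuousOn (fun x => Wt x t i)
      (Set.Icc 0 l) := fun t ht i => (hWtcont i).comp (hxcurve t) (hmapsx t ht)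
  have hWxslicex : ∀ t ∈ Set.Ici (0 : ℝ), ∀ i, ContinuousOn (fun x => Wx x t i)
      (Set.Icc 0 l) := fun t ht i => (hWxcont i).comp (hxcurve t) (hmapsx t ht)
  have hWslicet : ∀ x ∈ Set.Icc (0 : ℝ) l, ∀ i, ContinuousOn (fun τ => W x τ i)
      (Set.Ici 0) := fun x hx i => (hWcont i).comp (htcurve x) (hmapst x hx)
  have hWtslicet : ∀ x ∈ Set.Icc (0 : ℝ) l, ∀ i, ContinuousOn (fun τ => Wt x τ i)
      (Set.Ici 0) := fun x hx i => (hWtcont i).comp (htcurve x) (hmapst x hx)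
  have hFslicex : ∀ t ∈ Set.Ici (0 : ℝ), ContinuousOn (fun x => F x t) (Set.Icc 0 l) := by
    intro t ht
    simp only [hF_def]
    exact continuousOn_finset_sum _ fun i _ => (hpcont i).mul ((hWslicex t ht i).pow 2)
  have hFtslicex : ∀ t ∈ Set.Ici (0 : ℝ), ContinuousOn (fun x => Ft x t) (Set.Icc 0 l) := by
    intro t ht
    simp only [hFt_def]
    exact continuousOn_finset_sum _ fun i _ => (hpcont i).mul
      ((continuousOn_const.mul (hWslicex t ht i)).mul (hWtslicex t ht i))
  have hGxslicex : ∀ t ∈ Set.Ici (0 : ℝ), ContinuousOn (fun x => Gx x t) (Set.Icc 0 l) := by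
    intro t ht
    simp only [hGx_def]
    exact continuousOn_finset_sum _ fun i _ => continuousOn_const.mul
      (((hqcont i).mul ((hWslicex t ht i).pow 2)).add ((hpcont i).mul
        ((continuousOn_const.mul (hWslicex t ht i)).mul (hWxslicex t ht i))))
  have hGslicex : ∀ t ∈ Set.Ici (0 : ℝ), ContinuousOn (fun x => G x t) (Set.Icc 0 l) := by
    intro t ht
    simp only [hG_def]
    exact continuousOn_finset_sum _ fun i _ => continuousOn_const.mul
      ((hpcont i).mul ((hWslicex t ht i).pow 2))
  have hFslicet : ∀ x ∈ Set.Icc (0 : ℝ) l, ContinuousOn (fun τ => F x τ) (Set.Ici 0) := by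
    intro x hx
    simp only [hF_def]
    exact continuousOn_finset_sum _ fun i _ => continuousOn_const.mul
      ((hWslicet x hx i).pow 2)
  have hFtslicet : ∀ x ∈ Set.Icc (0 : ℝ) l, ContinuousOn (fun τ => Ft x τ) (Set.Ici 0) := by
    intro x hx
    simp only [hFt_def]
    exact continuousOn_finset_sum _ fun i _ => continuousOn_const.mul
      ((continuousOn_const.mul (hWslicet x hx i)).mul (hWtslicet x hx i))
  have hW2slicex : ∀ t ∈ Set.Ici (0 : ℝ), ContinuousOn (fun x => ∑ i, W x t i ^ 2)
      (Set.Icc 0 l) := fun t ht =>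
    continuousOn_finset_sum _ fun i _ => (hWslicex t ht i).pow 2
  -- interval integrability of slices
  have hFint : ∀ t ∈ Set.Ici (0 : ℝ), IntervalIntegrable (fun x => F x t) volume 0 l := by
    intro t ht
    apply ContinuousOn.intervalIntegrable
    rw [Set.uIcc_of_le hl.le]
    exact hFslicex t ht
  have hFtint : ∀ t ∈ Set.Ici (0 : ℝ), IntervalIntegrable (fun x => Ft x t) volume 0 l := by
    intro t ht
    apply ContinuousOn.intervalIntegrable
    rw [Set.uIcc_of_le hl.le]
    exact hFtslicex t ht
  have hGxint : ∀ t ∈ Set.Ici (0 : ℝ), IntervalIntegrable (fun x => Gx x t) volume 0 l := by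
    intro t ht
    apply ContinuousOn.intervalIntegrable
    rw [Set.uIcc_of_le hl.le]
    exact hGxslicex t ht
  have hW2int : ∀ t ∈ Set.Ici (0 : ℝ), IntervalIntegrable (fun x => ∑ i, W x t i ^ 2)
      volume 0 l := by
    intro t ht
    apply ContinuousOn.intervalIntegrable
    rw [Set.uIcc_of_le hl.le]
    exact hW2slicex t ht
  -- time derivative of F
  have hFd : ∀ x ∈ Set.Icc (0 : ℝ) l, ∀ t ∈ Set.Ici (0 : ℝ),
      HasDerivWithinAt (fun τ => F x τ) (Ft x t) (Set.Ici 0) t := by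
    intro x hx t ht
    simp only [hF_def, hFt_def]
    have h := HasDerivWithinAt.fun_sum (u := Finset.univ)
      (fun i (_ : i ∈ Finset.univ) => ((hWt x hx t ht i).pow 2).const_mul (p x i))
    refine h.congr_deriv ?_
    exact Finset.sum_congr rfl fun i _ => by push_cast; ring
  -- space derivative of G
  have hGd : ∀ t ∈ Set.Ici (0 : ℝ), ∀ x ∈ Set.Icc (0 : ℝ) l,
      HasDerivWithinAt (fun y => G y t) (Gx x t) (Set.Icc 0 l) x := by
    intro t ht x hx
    simp only [hG_def, hGx_def]
    have h := HasDerivWithinAt.fun_sum (u := Finset.univ)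
      (fun i (_ : i ∈ Finset.univ) =>
        ((hpd x hx i).mul ((hWx x hx t ht i).pow 2)).const_mul (lam i))
    refine h.congr_deriv ?_
    exact Finset.sum_congr rfl fun i _ => by simp only [Pi.pow_apply]; push_cast; ring
  -- componentwise PDE
  have hPDEc : ∀ x ∈ Set.Icc (0 : ℝ) l, ∀ t ∈ Set.Ici (0 : ℝ), ∀ i,
      Wt x t i = -(lam i * Wx x t i) - (Pim *ᵥ W x t) i := by
    intro x hx t ht i
    have h := congrFun (hPDE x hx t ht) i
    rw [hΛmat] at h
    simp only [Pi.add_apply, Matrix.mulVec_diagonal, Pi.zero_apply] at h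
    linarith
  -- pointwise interior estimate
  have hpt : ∀ x ∈ Set.Icc (0 : ℝ) l, ∀ t ∈ Set.Ici (0 : ℝ),
      Ft x t + Gx x t ≤ -η * F x t := by
    intro x hx t ht
    have hd := hdiss x hx (W x t)
    rw [hblk (Pp x) (Pm x), hblk (Pp' x) (Pm' x), hΛmat, Matrix.diagonal_mul_diagonal] at hd
    simp only [Matrix.add_mulVec, Matrix.neg_mulVec, dotProduct_add,
      dotProduct_neg, quad_diag, quad_right, quad_left] at hd
    simp only [hF_def, hFt_def, hGx_def, hp_def, hq_def]
    have e1 : (∑ i, Sum.elim (Pp x) (Pm x) i * (2 * W x t i * Wt x t i)) +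
        (∑ i, lam i * (Sum.elim (Pp' x) (Pm' x) i * W x t i ^ 2 +
          Sum.elim (Pp x) (Pm x) i * (2 * W x t i * Wx x t i))) =
        (∑ i, lam i * Sum.elim (Pp' x) (Pm' x) i * W x t i ^ 2) -
        ((∑ i, (Pim *ᵥ W x t) i * (Sum.elim (Pp x) (Pm x) i * W x t i)) +
         (∑ i, W x t i * (Sum.elim (Pp x) (Pm x) i * (Pim *ᵥ W x t) i))) := by
      rw [← Finset.sum_add_distrib, ← Finset.sum_add_distrib, ← Finset.sum_sub_distrib]
      refine Finset.sum_congr rfl fun i _ => ?_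
      rw [hPDEc x hx t ht i]
      ring
    linarith [hd, e1]
  -- representation of V as a primitive
  have hVrep : ∀ t ∈ Set.Ici (0 : ℝ), V t = V 0 + ∫ s in (0 : ℝ)..t, g s := by
    intro t ht
    rw [Set.mem_Ici] at ht
    have hFslice : ∀ x ∈ Set.Icc (0 : ℝ) l, F x t - F x 0 = ∫ s in (0 : ℝ)..t, Ft x s := by
      intro x hx
      rw [intervalIntegral.integral_eq_sub_of_hasDeriv_right_of_le ht
        ((hFslicet x hx).mono Set.Icc_subset_Ici_self)
        (fun s hs => ((hFd x hx s (le_of_lt hs.1)).hasDerivAt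
          (Ici_mem_nhds hs.1)).hasDerivWithinAt)
        (by
          apply ContinuousOn.intervalIntegrable
          rw [Set.uIcc_of_le ht]
          exact (hFtslicet x hx).mono Set.Icc_subset_Ici_self)]
    have hsub : (∫ x in (0 : ℝ)..l, F x t) - (∫ x in (0 : ℝ)..l, F x 0) =
        ∫ x in (0 : ℝ)..l, (F x t - F x 0) :=
      (intervalIntegral.integral_sub (hFint t ht) (hFint 0 Set.self_mem_Ici)).symm
    have hcongr : (∫ x in (0 : ℝ)..l, (F x t - F x 0)) =
        ∫ x in (0 : ℝ)..l, ∫ s in (0 : ℝ)..t, Ft x s :=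
      intervalIntegral.integral_congr fun x hx =>
        hFslice x (by rwa [Set.uIcc_of_le hl.le] at hx)
    have hswap : (∫ x in (0 : ℝ)..l, ∫ s in (0 : ℝ)..t, Ft x s) =
        ∫ s in (0 : ℝ)..t, ∫ x in (0 : ℝ)..l, Ft x s := by
      rw [intervalIntegral.integral_of_le hl.le, intervalIntegral.integral_of_le ht]
      simp_rw [intervalIntegral.integral_of_le ht, intervalIntegral.integral_of_le hl.le]
      apply MeasureTheory.integral_integral_swap
      rw [Measure.prod_restrict]
      have hcpt : IsCompact (Set.Icc (0 : ℝ) l ×ˢ Set.Icc (0 : ℝ) t) :=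
        isCompact_Icc.prod isCompact_Icc
      have hcont2 : ContinuousOn (Function.uncurry Ft)
          (Set.Icc (0 : ℝ) l ×ˢ Set.Icc (0 : ℝ) t) :=
        hFtc.mono (Set.prod_mono_right Set.Icc_subset_Ici_self)
      have hint : IntegrableOn (Function.uncurry Ft)
          (Set.Icc (0 : ℝ) l ×ˢ Set.Icc (0 : ℝ) t) (volume.prod volume) := by
        rw [← MeasureTheory.Measure.volume_eq_prod]
        exact ContinuousOn.integrableOn_compact hcpt hcont2
      exact hint.mono_set (Set.prod_mono Set.Ioc_subset_Icc_self Set.Ioc_subset_Icc_self)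
    simp only [hV_def, hg_def]
    linarith [hsub, hcongr, hswap]
  -- a uniform bound for Ft on the relevant rectangle
  obtain ⟨B, hB⟩ := (isCompact_Icc.prod (isCompact_Icc (a := (0:ℝ)) (b := T))
    ).exists_bound_of_continuousOn (hFtc.mono (Set.prod_mono_right Set.Icc_subset_Ici_self))
  -- continuity of g on [0, T]
  have hgc : ContinuousOn g (Set.Icc 0 T) := by
    intro t₀ ht₀
    simp only [hg_def]
    apply intervalIntegral.continuousWithinAt_of_dominated_interval
      (bound := fun _ => B)
    · filter_upwards [self_mem_nhdsWithin] with τ hτ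
      apply ContinuousOn.aestronglyMeasurable _ measurableSet_uIoc
      rw [Set.uIoc_of_le hl.le]
      exact (hFtslicex τ hτ.1).mono Set.Ioc_subset_Icc_self
    · filter_upwards [self_mem_nhdsWithin] with τ hτ
      refine MeasureTheory.ae_of_all _ fun x hx => ?_
      rw [Set.uIoc_of_le hl.le] at hx
      exact hB (x, τ) ⟨Set.Ioc_subset_Icc_self hx, hτ⟩
    · exact intervalIntegrable_const
    · refine MeasureTheory.ae_of_all _ fun x hx => ?_
      rw [Set.uIoc_of_le hl.le] at hx
      have hx' : x ∈ Set.Icc (0 : ℝ) l := Set.Ioc_subset_Icc_self hx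
      exact ((hFtslicet x hx' t₀ ht₀.1).mono Set.Icc_subset_Ici_self)
  -- integrability of g
  have hgint : IntegrableOn g (Set.uIcc 0 T) volume := by
    rw [Set.uIcc_of_le hT]
    exact ContinuousOn.integrableOn_compact isCompact_Icc hgc
  -- continuity of V on [0, T]
  have hVc : ContinuousOn V (Set.Icc 0 T) := by
    have h1 : ContinuousOn (fun u => V 0 + ∫ s in (0 : ℝ)..u, g s) (Set.Icc 0 T) := by
      apply continuousOn_const.add
      have h2 := intervalIntegral.continuousOn_primitive_interval (a := 0) (b := T)
        (μ := volume) hgint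
      rwa [Set.uIcc_of_le hT] at h2
    exact h1.congr fun u hu => hVrep u hu.1
  -- derivative of V on [0, T)
  have hVd : ∀ t ∈ Set.Ico 0 T, HasDerivWithinAt V (g t) (Set.Icc 0 T) t := by
    intro t ht
    haveI : Fact (t ∈ Set.Icc (0 : ℝ) T) := ⟨⟨ht.1, ht.2.le⟩⟩
    have hgi : IntervalIntegrable g volume 0 t := by
      apply ContinuousOn.intervalIntegrable
      rw [Set.uIcc_of_le ht.1]
      exact hgc.mono (Set.Icc_subset_Icc le_rfl ht.2.le)
    have hmeas : StronglyMeasurableAtFilter g (nhdsWithin t (Set.Icc 0 T)) volume :=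
      ⟨Set.Icc 0 T, self_mem_nhdsWithin, hgc.aestronglyMeasurable measurableSet_Icc⟩
    have hprim : HasDerivWithinAt (fun u => ∫ s in (0 : ℝ)..u, g s) (g t)
        (Set.Icc 0 T) t :=
      intervalIntegral.integral_hasDerivWithinAt_right hgi hmeas (hgc t ⟨ht.1, ht.2.le⟩)
    exact ((hprim.const_add (V 0)).congr (fun u hu => hVrep u hu.1) (hVrep t ht.1))
  -- the supremum of the disturbance
  have hbddS : BddAbove (Set.range fun s : Set.Icc (0 : ℝ) T => ∑ i, (b (↑s) i) ^ 2) := by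
    have hc : ContinuousOn (fun t => ∑ i, (b t i) ^ 2) (Set.Icc 0 T) :=
      continuousOn_finset_sum _ fun i _ =>
        ((hbcont i).mono Set.Icc_subset_Ici_self).pow 2
    have h2 := isCompact_Icc.bddAbove_image hc
    have heq : (Set.range fun s : Set.Icc (0 : ℝ) T => ∑ i, (b (↑s) i) ^ 2) =
        (fun t => ∑ i, (b t i) ^ 2) '' Set.Icc 0 T := by
      ext y
      simp [Set.mem_image, Set.mem_range, Subtype.exists]
    rwa [heq]
  have hbS : ∀ t ∈ Set.Icc (0 : ℝ) T, (∑ i, (b t i) ^ 2) ≤ S :=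
    fun t ht => le_ciSup hbddS (⟨t, ht⟩ : Set.Icc (0 : ℝ) T)
  have hS0 : (0 : ℝ) ≤ S :=
    le_trans (Finset.sum_nonneg fun i _ => sq_nonneg _) (hbS 0 ⟨le_rfl, hT⟩)
  -- dissipation bound for g
  have hgb : ∀ t ∈ Set.Ico (0 : ℝ) T, g t ≤ -η * V t + ν * (1 + 1 / ξ) * S := by
    intro t ht'
    have htI : t ∈ Set.Ici (0 : ℝ) := ht'.1
    have hGftc : (∫ x in (0 : ℝ)..l, Gx x t) = G l t - G 0 t := by
      apply intervalIntegral.integral_eq_sub_of_hasDeriv_right_of_le hl.le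
        (hGslicex t htI)
      · intro x hx
        exact ((hGd t htI x ⟨hx.1.le, hx.2.le⟩).hasDerivAt
          (Icc_mem_nhds hx.1 hx.2)).hasDerivWithinAt
      · exact hGxint t htI
    have hIA : IntervalIntegrable (fun x => -Gx x t) volume 0 l := by
      apply ContinuousOn.intervalIntegrable
      rw [Set.uIcc_of_le hl.le]
      exact (hGxslicex t htI).neg
    have hIB : IntervalIntegrable (fun x => -η * F x t) volume 0 l := by
      apply ContinuousOn.intervalIntegrable
      rw [Set.uIcc_of_le hl.le]
      exact continuousOn_const.mul (hFslicex t htI)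
    have hIC : IntervalIntegrable (fun x => -Gx x t + -η * F x t) volume 0 l := by
      apply ContinuousOn.intervalIntegrable
      rw [Set.uIcc_of_le hl.le]
      exact ((hGxslicex t htI).neg).add (continuousOn_const.mul (hFslicex t htI))
    have hmono : (∫ x in (0 : ℝ)..l, Ft x t) ≤
        ∫ x in (0 : ℝ)..l, (-Gx x t + -η * F x t) := by
      apply intervalIntegral.integral_mono_on hl.le (hFtint t htI) hIC
      intro x hx
      have := hpt x hx t htI
      linarith
    have hsplit : (∫ x in (0 : ℝ)..l, (-Gx x t + -η * F x t)) =
        -(G l t - G 0 t) + -η * ∫ x in (0 : ℝ)..l, F x t := by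
      rw [intervalIntegral.integral_add hIA hIB, intervalIntegral.integral_neg,
        intervalIntegral.integral_const_mul, hGftc]
    -- boundary estimate
    have hsum : ∀ (aa : Fin m → ℝ) (cc : Fin km → ℝ) (v : Fin m ⊕ Fin km → ℝ),
        (∑ i, Sum.elim aa cc i * v i ^ 2) =
          (∑ j, aa j * v (Sum.inl j) ^ 2) + ∑ j, cc j * v (Sum.inr j) ^ 2 := by
      intro aa cc v
      rw [Fintype.sum_sum_type]
      simp only [Sum.elim_inl, Sum.elim_inr]
    have e2 : ∀ x' : ℝ, G x' t = (∑ j, Λp j * Pp x' j * W x' t (Sum.inl j) ^ 2)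
        - ∑ j, Λm j * Pm x' j * W x' t (Sum.inr j) ^ 2 := by
      intro x'
      simp only [hG_def, hp_def, hlam_def, Fintype.sum_sum_type, Sum.elim_inl, Sum.elim_inr]
      have h1 : (∑ j, Λp j * (Pp x' j * W x' t (Sum.inl j) ^ 2)) =
          ∑ j, Λp j * Pp x' j * W x' t (Sum.inl j) ^ 2 :=
        Finset.sum_congr rfl fun j _ => by ring
      have h2 : (∑ j, -Λm j * (Pm x' j * W x' t (Sum.inr j) ^ 2)) =
          -∑ j, Λm j * Pm x' j * W x' t (Sum.inr j) ^ 2 := by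
        rw [← Finset.sum_neg_distrib]
        exact Finset.sum_congr rfl fun j _ => by ring
      rw [h1, h2]
      ring
    have hGdiff : G l t - G 0 t =
        (∑ i, Sum.elim (fun i => Λp i * Pp l i) (fun i => Λm i * Pm 0 i) i *
          (Sum.elim (fun i => W l t (Sum.inl i)) (fun i => W 0 t (Sum.inr i))) i ^ 2) -
        ∑ i, Sum.elim (fun i => Λp i * Pp 0 i) (fun i => Λm i * Pm l i) i *
          (Sum.elim (fun i => W 0 t (Sum.inl i)) (fun i => W l t (Sum.inr i))) i ^ 2 := by
      rw [hsum, hsum, e2 l, e2 0]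
      simp only [Sum.elim_inl, Sum.elim_inr]
      ring
    have hain : ∀ i, 0 ≤ Sum.elim (fun i => Λp i * Pp 0 i) (fun i => Λm i * Pm l i) i := by
      intro i
      cases i with
      | inl j =>
        show 0 ≤ Λp j * Pp 0 j
        exact mul_nonneg (hΛppos j).le (le_trans hζ.le (hPpbound 0 ⟨le_rfl, hl.le⟩ j).1)
      | inr j =>
        show 0 ≤ Λm j * Pm l j
        exact mul_nonneg (hΛmpos j).le (le_trans hζ.le (hPmbound l ⟨hl.le, le_rfl⟩ j).1)
    have hb2 := hbdry (Sum.elim (fun i => W l t (Sum.inl i)) (fun i => W 0 t (Sum.inr i)))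
    rw [hblk, hblk] at hb2
    have hn2 := hnu (b t)
    rw [hblk] at hn2
    have hKey := boundary_aux K M
      (Sum.elim (fun i => Λp i * Pp 0 i) (fun i => Λm i * Pm l i))
      (Sum.elim (fun i => Λp i * Pp l i) (fun i => Λm i * Pm 0 i))
      (Sum.elim (fun i => W l t (Sum.inl i)) (fun i => W 0 t (Sum.inr i)))
      (b t) hξ hain hb2 hn2
    rw [← hBC t htI] at hKey
    have hfin : ν * (1 + 1 / ξ) * ∑ i, (b t i) ^ 2 ≤ ν * (1 + 1 / ξ) * S := by
      apply mul_le_mul_of_nonneg_left (hbS t ⟨ht'.1, ht'.2.le⟩)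
      positivity
    show (∫ x in (0 : ℝ)..l, Ft x t) ≤ -η * (∫ x in (0 : ℝ)..l, F x t) + ν * (1 + 1 / ξ) * S
    linarith [hmono, hsplit, hGdiff, hKey, hfin]
  -- Grönwall
  have hC0 : (0 : ℝ) ≤ ν * (1 + 1 / ξ) * S :=
    mul_nonneg (mul_nonneg hν.le (by positivity)) hS0
  have hgron := gronwall_aux hη hC0 hT hVc hVd hgb
  -- comparison with the unweighted L² norms
  have hTI : T ∈ Set.Ici (0 : ℝ) := hT
  have hlow : ζ * (∫ x in (0 : ℝ)..l, ∑ i, (W x T i) ^ 2) ≤ V T := by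
    rw [← intervalIntegral.integral_const_mul]
    simp only [hV_def]
    apply intervalIntegral.integral_mono_on hl.le ((hW2int T hTI).const_mul ζ)
      (hFint T hTI)
    intro x hx
    simp only [hF_def]
    rw [Finset.mul_sum]
    exact Finset.sum_le_sum fun i _ =>
      mul_le_mul_of_nonneg_right (hpbound x hx i).1 (sq_nonneg _)
  have hup : V 0 ≤ β * ∫ x in (0 : ℝ)..l, ∑ i, (W x 0 i) ^ 2 := by
    rw [← intervalIntegral.integral_const_mul]
    simp only [hV_def]
    apply intervalIntegral.integral_mono_on hl.le (hFint 0 Set.self_mem_Ici)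
      ((hW2int 0 Set.self_mem_Ici).const_mul β)
    intro x hx
    simp only [hF_def]
    rw [Finset.mul_sum]
    exact Finset.sum_le_sum fun i _ =>
      mul_le_mul_of_nonneg_right (hpbound x hx i).2 (sq_nonneg _)
  have hexp : (0 : ℝ) ≤ Real.exp (-η * T) := (Real.exp_pos _).le
  rw [← mul_le_mul_iff_right₀ hζ]
  have hfield : ζ * (β / ζ * Real.exp (-η * T) * (∫ x in (0 : ℝ)..l, ∑ i, (W x 0 i) ^ 2)
      + ν / (ζ * η) * (1 + 1 / ξ) * S) =
      β * (∫ x in (0 : ℝ)..l, ∑ i, (W x 0 i) ^ 2) * Real.exp (-η * T)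
      + ν * (1 + 1 / ξ) * S / η := by
    field_simp
  rw [hfield]
  have h7 : V 0 * Real.exp (-η * T) ≤
      β * (∫ x in (0 : ℝ)..l, ∑ i, (W x 0 i) ^ 2) * Real.exp (-η * T) :=
    mul_le_mul_of_nonneg_right hup hexp
  linarith [hgron, hlow, h7]
end
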